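/- arXiv:1211.4790 — 10 statements merged into one kernel-verified Lean document; each statement's English description precedes it below -/
import Mathlib

section
/- Let Q be a bounded quasinilpotent operator on a complex Banach space X. If the limsup as t → +∞ of ‖e^{tQ}‖ is finite for every direction, i.e., G_Q = ℂ, then Q = 0. -/
/-!
The entire function `w ↦ exp (w • Q)` has exponential type, and the hypothesis bounds it along
the real and the imaginary axis. Phragmén–Lindelöf in each of the four quadrants bounds it on all
of `ℂ`, so by Liouville's theorem it is constant, and its derivative `Q` at `0` vanishes.
-/

open Filter Asymptotics Bornology Complex NormedSpace

theorem NormedSpace.norm_exp_le_exp_norm {𝕂 𝔸 : Type*} [RCLike 𝕂] [NormedRing 𝔸] [NormOneClass 𝔸]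
    [NormedAlgebra 𝕂 𝔸] [CompleteSpace 𝔸] (a : 𝔸) : ‖exp a‖ ≤ Real.exp ‖a‖ := by
  have hterm (n : ℕ) : ‖(n.factorial⁻¹ : 𝕂) • a ^ n‖ ≤ ‖a‖ ^ n / n.factorial := by
    rw [norm_smul, norm_inv, RCLike.norm_natCast, inv_mul_eq_div]
    gcongr
    exact norm_pow_le a n
  calc ‖exp a‖ = ‖∑' n : ℕ, (n.factorial⁻¹ : 𝕂) • a ^ n‖ := by rw [exp_eq_tsum 𝕂]
    _ ≤ ∑' n : ℕ, ‖(n.factorial⁻¹ : 𝕂) • a ^ n‖ := norm_tsum_le_tsum_norm (norm_expSeries_summable' a)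
    _ ≤ ∑' n : ℕ, ‖a‖ ^ n / n.factorial :=
        (norm_expSeries_summable' a).tsum_le_tsum hterm (Real.summable_pow_div_factorial ‖a‖)
    _ = Real.exp ‖a‖ := by rw [Real.exp_eq_exp_ℝ, exp_eq_tsum_div]

theorem Continuous.exists_forall_norm_le_on_line {E : Type*} [SeminormedAddCommGroup E]
    {f : ℂ → E} (hf : Continuous f) {z : ℂ}
    (hpos : IsBoundedUnder (· ≤ ·) atTop fun t : ℝ => ‖f (t * z)‖)
    (hneg : IsBoundedUnder (· ≤ ·) atTop fun t : ℝ => ‖f (t * -z)‖) :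
    ∃ C, ∀ t : ℝ, ‖f (t * z)‖ ≤ C := by
  have hline : Continuous fun t : ℝ => f (t * z) := by fun_prop
  have hbot : (fun t : ℝ => f (t * z)) =O[atBot] fun _ => (1 : ℝ) := by
    have := ((isBigO_one_iff ℝ).2 hneg).comp_tendsto tendsto_neg_atBot_atTop
    simpa only [Function.comp_def, ofReal_neg, neg_mul_neg] using this
  obtain ⟨C, hC⟩ := isBounded_iff_forall_norm_le.1 <|
    hline.isBounded_range_iff_isBigO_atTop_atBot.2 ⟨(isBigO_one_iff ℝ).2 hpos, hbot⟩
  exact ⟨C, fun t => hC _ ⟨t, rfl⟩⟩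

theorem PhragmenLindelof.norm_le_of_norm_le_on_axes {E : Type*} [NormedAddCommGroup E]
    [NormedSpace ℂ E] {f : ℂ → E} {C : ℝ} (hd : Differentiable ℂ f)
    (hexp : ∃ c < (2 : ℝ), ∃ B, f =O[cobounded ℂ] fun z => Real.exp (B * ‖z‖ ^ c))
    (hre : ∀ x : ℝ, ‖f x‖ ≤ C) (him : ∀ x : ℝ, ‖f (x * I)‖ ≤ C) (z : ℂ) : ‖f z‖ ≤ C := by
  obtain ⟨c, hc, B, hO⟩ := hexp
  have hO' (s : Set ℂ) : f =O[cobounded ℂ ⊓ 𝓟 s] fun z => Real.exp (B * ‖z‖ ^ c) :=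
    hO.mono inf_le_left
  rcases le_total 0 z.re with hz_re | hz_re <;> rcases le_total 0 z.im with hz_im | hz_im
  · exact quadrant_I hd.diffContOnCl ⟨c, hc, B, hO' _⟩ (fun x _ => hre x) (fun x _ => him x)
      hz_re hz_im
  · exact quadrant_IV hd.diffContOnCl ⟨c, hc, B, hO' _⟩ (fun x _ => hre x) (fun x _ => him x)
      hz_re hz_im
  · exact quadrant_II hd.diffContOnCl ⟨c, hc, B, hO' _⟩ (fun x _ => hre x) (fun x _ => him x)
      hz_re hz_im
  · exact quadrant_III hd.diffContOnCl ⟨c, hc, B, hO' _⟩ (fun x _ => hre x) (fun x _ => him x)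
      hz_re hz_im

theorem NormedSpace.eq_zero_of_forall_isBoundedUnder_norm_exp_smul {𝔸 : Type*} [NormedRing 𝔸]
    [NormOneClass 𝔸] [NormedAlgebra ℂ 𝔸] [CompleteSpace 𝔸] (a : 𝔸)
    (h : ∀ z : ℂ, IsBoundedUnder (· ≤ ·) atTop fun t : ℝ => ‖exp (((t : ℂ) * z) • a)‖) :
    a = 0 := by
  set f : ℂ → 𝔸 := fun w => exp (w • a)
  have hderiv (w : ℂ) : HasDerivAt f (exp (w • a) * a) w := hasDerivAt_exp_smul_const a w
  have hd : Differentiable ℂ f := fun w => (hderiv w).differentiableAt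
  have hexp : ∃ c < (2 : ℝ), ∃ B, f =O[cobounded ℂ] fun w => Real.exp (B * ‖w‖ ^ c) := by
    refine ⟨1, one_lt_two, ‖a‖, .of_bound 1 (.of_forall fun w => ?_)⟩
    rw [one_mul, Real.rpow_one, Real.norm_of_nonneg (Real.exp_pos _).le, mul_comm]
    exact (norm_exp_le_exp_norm (𝕂 := ℂ) _).trans (Real.exp_le_exp.2 (norm_smul_le w a))
  obtain ⟨C₁, hC₁⟩ := hd.continuous.exists_forall_norm_le_on_line (h 1) (h (-1))
  obtain ⟨C₂, hC₂⟩ := hd.continuous.exists_forall_norm_le_on_line (h I) (h (-I))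
  have hbdd : IsBounded (Set.range f) := isBounded_iff_forall_norm_le.2 ⟨max C₁ C₂, by
    rintro _ ⟨w, rfl⟩
    refine PhragmenLindelof.norm_le_of_norm_le_on_axes hd hexp (fun x => ?_)
      (fun x => (hC₂ x).trans (le_max_right _ _)) w
    simpa using (hC₁ x).trans (le_max_left _ _)⟩
  have hconst : HasDerivAt f 0 0 := by
    rw [show f = fun _ => f 0 from funext fun w => hd.apply_eq_apply_of_bounded hbdd w 0]
    exact hasDerivAt_const _ _
  simpa using (hderiv 0).unique hconst

theorem semigroupBounded_all_directions_implies_zero_general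
    {X : Type*} [NormedAddCommGroup X] [NormedSpace ℂ X] [CompleteSpace X]
    (Q : X →L[ℂ] X)
    (h : ∀ z : ℂ, Filter.IsBoundedUnder (· ≤ ·) Filter.atTop
        (fun t : ℝ => ‖NormedSpace.exp (((t : ℂ) * z) • Q)‖)) :
    Q = 0 := by
  rcases subsingleton_or_nontrivial X with hX | hX
  · exact Subsingleton.elim _ _
  · exact eq_zero_of_forall_isBoundedUnder_norm_exp_smul Q h

theorem semigroupBounded_all_directions_implies_zero
    {X : Type*} [NormedAddCommGroup X] [NormedSpace ℂ X] [CompleteSpace X]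
    (Q : X →L[ℂ] X) (hQ : spectrum ℂ Q = {0})
    (h : ∀ z : ℂ, Filter.IsBoundedUnder (· ≤ ·) Filter.atTop
        (fun t : ℝ => ‖NormedSpace.exp (((t : ℂ) * z) • Q)‖)) :
    Q = 0 :=
  semigroupBounded_all_directions_implies_zero_general Q h
end

section
/- Let Q be a nonzero nilpotent bounded operator on a complex Banach space X with Q^{n+1} = 0 and Q^n ≠ 0. Then for every z ≠ 0, sup_{j} (j+1)^{1/2} ‖zQ(I + zQ)^j‖ = ∞; i.e., the Tauberian set T_Q^{1/2} equals {0}. -/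
/-!
If `S := z • Q` lay in the Tauberian set, then `S (1 + S)ʲ → 0` because `√(j + 1) → ∞`, hence
`Sᵏ (1 + S)ʲ = Sᵏ⁻¹ · S (1 + S)ʲ → 0` for every `k ≥ 1`. But if `Sᵏ⁺¹ = 0`, the sequence
`Sᵏ (1 + S)ʲ` is the constant `Sᵏ`, so `Sᵏ = 0`; descending on the nilpotency index gives `S = 0`,
which is impossible for `z ≠ 0` since `Q ≠ 0`.
-/

open Filter Topology

theorem tendsto_zero_of_mul_norm_le {α E : Type*} [SeminormedAddCommGroup E] {l : Filter α}
    {f : α → E} {c : α → ℝ} {N : ℝ} (hc : Tendsto c l atTop) (hf : ∀ j, c j * ‖f j‖ ≤ N) :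
    Tendsto f l (𝓝 0) := by
  rw [tendsto_zero_iff_norm_tendsto_zero]
  refine squeeze_zero' (g := fun j => N / c j) (.of_forall fun j => norm_nonneg _) ?_
    (tendsto_const_nhds.div_atTop hc)
  filter_upwards [hc.eventually_gt_atTop 0] with j hj
  rw [le_div_iff₀ hj, mul_comm]
  exact hf j

section Ring

variable {R : Type*} [Ring R]

theorem pow_mul_one_add_pow_of_pow_succ_eq_zero {a : R} {k : ℕ} (hk : a ^ (k + 1) = 0) (j : ℕ) :
    a ^ k * (1 + a) ^ j = a ^ k := by
  induction j with
  | zero => rw [pow_zero, mul_one]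
  | succ j ih => rw [pow_succ, ← mul_assoc, ih, mul_add, mul_one, ← pow_succ, hk, add_zero]

variable [TopologicalSpace R] [ContinuousMul R] [T2Space R]

theorem eq_zero_of_pow_succ_eq_zero_of_tendsto_mul_one_add_pow {a : R}
    (ha : Tendsto (fun j : ℕ => a * (1 + a) ^ j) atTop (𝓝 0)) :
    ∀ k : ℕ, a ^ (k + 1) = 0 → a = 0
  | 0, h => pow_one a ▸ h
  | k + 1, h => by
    refine eq_zero_of_pow_succ_eq_zero_of_tendsto_mul_one_add_pow ha k ?_
    have hlim : Tendsto (fun j : ℕ => a ^ (k + 1) * (1 + a) ^ j) atTop (𝓝 0) := by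
      simpa only [pow_succ, mul_assoc, mul_zero] using ha.const_mul (a ^ k)
    simp only [pow_mul_one_add_pow_of_pow_succ_eq_zero h] at hlim
    exact tendsto_nhds_unique tendsto_const_nhds hlim

end Ring

theorem nilpotent_tauberianHalfSet_eq_zero_general
    {X : Type*} [NormedAddCommGroup X] [NormedSpace ℂ X]
    (Q : X →L[ℂ] X) (n : ℕ) (hn : 1 ≤ n)
    (hnil : Q ^ (n + 1) = 0) (hne : Q ^ n ≠ 0) :
    {z : ℂ | ∃ N : ℝ, ∀ j : ℕ,
        Real.sqrt (j + 1) * ‖(z • Q) * (1 + z • Q) ^ j‖ ≤ N} = {0} := by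
  ext z
  constructor
  · rintro ⟨N, hN⟩
    by_contra hz
    have hsqrt : Tendsto (fun j : ℕ => Real.sqrt (j + 1)) atTop atTop :=
      Real.tendsto_sqrt_atTop.comp (tendsto_atTop_add_const_right _ 1 tendsto_natCast_atTop_atTop)
    have hzQ : z • Q = 0 :=
      eq_zero_of_pow_succ_eq_zero_of_tendsto_mul_one_add_pow
        (tendsto_zero_of_mul_norm_le hsqrt hN) n (by rw [smul_pow, hnil, smul_zero])
    have hQ : Q = 0 := (smul_eq_zero.1 hzQ).resolve_left hz
    exact hne (by rw [hQ, zero_pow (by omega)])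
  · rintro rfl
    exact ⟨0, fun j => by simp⟩

theorem nilpotent_tauberianHalfSet_eq_zero
    {X : Type*} [NormedAddCommGroup X] [NormedSpace ℂ X] [CompleteSpace X]
    (Q : X →L[ℂ] X) (n : ℕ) (hn : 1 ≤ n)
    (hnil : Q ^ (n + 1) = 0) (hne : Q ^ n ≠ 0) :
    {z : ℂ | ∃ N : ℝ, ∀ j : ℕ,
        Real.sqrt (j + 1) * ‖(z • Q) * (1 + z • Q) ^ j‖ ≤ N} = {0} :=
  nilpotent_tauberianHalfSet_eq_zero_general Q n hn hnil hne
end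

section
/- Let Q be a bounded quasinilpotent operator on a complex Banach space X. Suppose z ∈ ℂ, z ≠ 0, is such that sup_{j∈ℕ} ‖(I − zQ)^{-j}‖ < ∞ and sup_{j∈ℕ} (j+1)^{1/2} ‖zQ(I − zQ)^j‖ < ∞ (where (I−zQ) plays the role of T(−z)). Then Q = 0. -/
/-! Quasinilpotence makes `T = 1 - z • Q` invertible, and `z • Q = T⁻¹ ^ j * (z • Q * T ^ j)`
gives `‖z • Q‖ ≤ C₁ C₂ / √(j + 1)` for every `j`, so `z • Q = 0`. -/

open Filter

theorem spectrum.isUnit_one_sub_smul_of_subset_zero {𝕜 A : Type*} [Field 𝕜] [Ring A]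
    [Algebra 𝕜 A] {a : A} (ha : spectrum 𝕜 a ⊆ {0}) (k : 𝕜) : IsUnit (1 - k • a) := by
  rcases eq_or_ne k 0 with rfl | hk
  · simp
  have hsmul := spectrum.unit_smul_eq_smul a (Units.mk0 k hk)
  rw [Units.smul_def, Units.val_mk0] at hsmul
  have hone : (1 : 𝕜) ∉ spectrum 𝕜 (k • a) := by
    rw [hsmul]
    rintro ⟨x, hx, hkx⟩
    rw [ha hx] at hkx
    simp at hkx
  simpa using spectrum.notMem_iff.mp hone

theorem norm_le_norm_inverse_pow_mul_norm_mul_pow {R : Type*} [NormedRing R] {a u : R}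
    (hu : IsUnit u) (hau : Commute a u) (j : ℕ) :
    ‖a‖ ≤ ‖Ring.inverse u ^ j‖ * ‖a * u ^ j‖ := by
  have hfactor : a = Ring.inverse u ^ j * (a * u ^ j) := by
    rw [(hau.pow_right j).eq, ← mul_assoc, Ring.inverse_pow,
      Ring.inverse_mul_cancel _ (hu.pow j), one_mul]
  calc ‖a‖ = ‖Ring.inverse u ^ j * (a * u ^ j)‖ := congrArg _ hfactor
    _ ≤ _ := norm_mul_le _ _

theorem eq_zero_of_forall_mul_le_of_tendsto_atTop {r C : ℝ} {u : ℕ → ℝ} (hr : 0 ≤ r)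
    (hu : Tendsto u atTop atTop) (h : ∀ j, r * u j ≤ C) : r = 0 := by
  by_contra hr0
  obtain ⟨j, hj⟩ :=
    ((hu.const_mul_atTop (hr.lt_of_ne' hr0)).eventually_gt_atTop C).exists
  exact (h j).not_gt hj

theorem gelfand_hille_type_general
    {X : Type*} [NormedAddCommGroup X] [NormedSpace ℂ X]
    (Q : X →L[ℂ] X) (hQ : spectrum ℂ Q = {0}) (z : ℂ) (hz : z ≠ 0)
    (h1 : ∃ C : ℝ, ∀ j : ℕ, ‖(Ring.inverse (1 - z • Q)) ^ j‖ ≤ C)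
    (h2 : ∃ C : ℝ, ∀ j : ℕ,
        Real.sqrt (j + 1) * ‖(z • Q) * (1 - z • Q) ^ j‖ ≤ C) :
    Q = 0 := by
  obtain ⟨C₁, h1⟩ := h1
  obtain ⟨C₂, h2⟩ := h2
  have hunit := spectrum.isUnit_one_sub_smul_of_subset_zero hQ.subset z
  have hcomm : Commute (z • Q) (1 - z • Q) := (Commute.one_right _).sub_right (Commute.refl _)
  have hbound (j : ℕ) : ‖z • Q‖ * Real.sqrt (j + 1) ≤ C₁ * C₂ :=
    calc ‖z • Q‖ * Real.sqrt (j + 1)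
        ≤ ‖Ring.inverse (1 - z • Q) ^ j‖ * ‖z • Q * (1 - z • Q) ^ j‖ * Real.sqrt (j + 1) := by
          gcongr; exact norm_le_norm_inverse_pow_mul_norm_mul_pow hunit hcomm j
      _ = ‖Ring.inverse (1 - z • Q) ^ j‖ * (Real.sqrt (j + 1) * ‖z • Q * (1 - z • Q) ^ j‖) := by
          ring
      _ ≤ C₁ * C₂ := mul_le_mul (h1 j) (h2 j) (by positivity) ((norm_nonneg _).trans (h1 0))
  have hsqrt : Tendsto (fun j : ℕ => Real.sqrt (j + 1)) atTop atTop :=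
    Real.tendsto_sqrt_atTop.comp (tendsto_atTop_add_const_right _ 1 tendsto_natCast_atTop_atTop)
  have hzQ : z • Q = 0 :=
    norm_eq_zero.mp (eq_zero_of_forall_mul_le_of_tendsto_atTop (norm_nonneg _) hsqrt hbound)
  exact (smul_eq_zero.mp hzQ).resolve_left hz

theorem gelfand_hille_type
    {X : Type*} [NormedAddCommGroup X] [NormedSpace ℂ X] [CompleteSpace X]
    (Q : X →L[ℂ] X) (hQ : spectrum ℂ Q = {0}) (z : ℂ) (hz : z ≠ 0)
    (h1 : ∃ C : ℝ, ∀ j : ℕ, ‖(Ring.inverse (1 - z • Q)) ^ j‖ ≤ C)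
    (h2 : ∃ C : ℝ, ∀ j : ℕ,
        Real.sqrt (j + 1) * ‖(z • Q) * (1 - z • Q) ^ j‖ ≤ C) :
    Q = 0 :=
  gelfand_hille_type_general Q hQ z hz h1 h2
end

section
/- Let Q be a bounded quasinilpotent operator on a complex Banach space X. If z ∈ G_Q, i.e., limsup_{t→+∞} ‖e^{tzQ}‖ < ∞, then for every k ∈ ℕ, limsup_{s→+∞} ‖(I − s z Q)^{-k}‖ < ∞; i.e., G_Q ⊂ A_Q^k for all k. -/
/-!
For `s ≥ 0` put `B = (s z) • Q`. If `‖exp (u • B)‖ ≤ M` for all `u ≥ 0`, the Laplace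
transform `∫₀^∞ e^{-u} exp (u • B) du` converges, is a two-sided inverse of `1 - B` (its
integrand has derivative `-(integrand) * (1 - B)`), and has norm at most
`M ∫₀^∞ e^{-u} du = M`. Since `exp (u • (s z) • Q) = exp ((u s) • z • Q)`, a single bound `M`
for the semigroup `t ↦ exp (t • z • Q)` on `[0, ∞)` serves all `s ≥ 0`, and then
`‖(1 - (s z) • Q)⁻¹ ^ k‖ ≤ M ^ k`. Such a bound exists because the semigroup is continuous
and eventually bounded.
-/

open NormedSpace Filter MeasureTheory Set Topology

lemma isBoundedUnder_norm_pow {α R : Type*} [SeminormedRing R] {l : Filter α} {f : α → R}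
    (hf : IsBoundedUnder (· ≤ ·) l (fun a => ‖f a‖)) (k : ℕ) :
    IsBoundedUnder (· ≤ ·) l (fun a => ‖f a ^ k‖) := by
  cases k with
  | zero => exact ⟨‖(1 : R)‖, by simp⟩
  | succ k =>
    obtain ⟨C, hC⟩ := hf
    refine ⟨C ^ (k + 1), eventually_map.2 ?_⟩
    filter_upwards [eventually_map.1 hC] with a ha
    exact (norm_pow_le' _ k.succ_pos).trans (pow_le_pow_left₀ (norm_nonneg _) ha _)

lemma Continuous.bddAbove_image_Ici_of_isBoundedUnder {f : ℝ → ℝ} (hf : Continuous f)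
    (hb : IsBoundedUnder (· ≤ ·) atTop f) (a : ℝ) : BddAbove (f '' Ici a) := by
  obtain ⟨C, hC⟩ := hb
  obtain ⟨T, hT⟩ := (eventually_map.1 hC).exists_forall_of_atTop
  obtain ⟨C', hC'⟩ := (isCompact_Icc (a := a) (b := max a T)).bddAbove_image hf.continuousOn
  refine ⟨max C C', ?_⟩
  rintro _ ⟨t, ht, rfl⟩
  rcases le_total t (max a T) with h | h
  · exact (hC' ⟨t, ⟨ht, h⟩, rfl⟩).trans (le_max_right _ _)
  · exact (hT t ((le_max_right _ _).trans h)).trans (le_max_left _ _)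

section Laplace

variable {𝔸 : Type*} [NormedRing 𝔸] [NormedAlgebra ℝ 𝔸] [CompleteSpace 𝔸] (B : 𝔸)

theorem hasDerivAt_real_exp_neg_smul_exp (t : ℝ) :
    HasDerivAt (fun u : ℝ => Real.exp (-u) • exp (u • B))
      (-(Real.exp (-t) • exp (t • B) * (1 - B))) t := by
  refine ((hasDerivAt_neg t).exp.smul (hasDerivAt_exp_smul_const B t)).congr_deriv ?_
  simp only [mul_neg_one, neg_smul, mul_sub, mul_one, smul_mul_assoc]
  abel

theorem continuous_real_exp_neg_smul_exp :
    Continuous (fun u : ℝ => Real.exp (-u) • exp (u • B)) :=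
  continuous_iff_continuousAt.2 fun u => (hasDerivAt_real_exp_neg_smul_exp B u).continuousAt

omit [CompleteSpace 𝔸] in
theorem commute_one_sub_real_exp_neg_smul_exp (u : ℝ) :
    Commute (1 - B) (Real.exp (-u) • exp (u • B)) :=
  (((Commute.one_left B).sub_left (Commute.refl B)).smul_right u).exp_right.smul_right _

variable {B} {M : ℝ} (hM : ∀ u : ℝ, 0 ≤ u → ‖exp (u • B)‖ ≤ M)
include hM

omit [CompleteSpace 𝔸] in
theorem norm_real_exp_neg_smul_exp_le {u : ℝ} (hu : 0 ≤ u) :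
    ‖Real.exp (-u) • exp (u • B)‖ ≤ Real.exp (-u) * M := by
  rw [norm_smul, Real.norm_of_nonneg (Real.exp_pos _).le]
  exact mul_le_mul_of_nonneg_left (hM u hu) (Real.exp_pos _).le

theorem integrableOn_real_exp_neg_smul_exp :
    IntegrableOn (fun u : ℝ => Real.exp (-u) • exp (u • B)) (Ioi 0) := by
  refine ((integrableOn_exp_neg_Ioi 0).mul_const M).mono'
    (continuous_real_exp_neg_smul_exp B).aestronglyMeasurable ?_
  filter_upwards [self_mem_ae_restrict measurableSet_Ioi] with u hu
  exact norm_real_exp_neg_smul_exp_le hM (le_of_lt hu)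

omit [CompleteSpace 𝔸] in
theorem tendsto_real_exp_neg_smul_exp_atTop :
    Tendsto (fun u : ℝ => Real.exp (-u) • exp (u • B)) atTop (𝓝 0) := by
  refine squeeze_zero_norm' ?_ (by simpa using Real.tendsto_exp_neg_atTop_nhds_zero.mul_const M)
  filter_upwards [eventually_ge_atTop 0] with u hu
  exact norm_real_exp_neg_smul_exp_le hM hu

theorem integral_real_exp_neg_smul_exp_mul_one_sub :
    (∫ u in Ioi 0, Real.exp (-u) • exp (u • B)) * (1 - B) = 1 := by
  have hftc := integral_Ioi_of_hasDerivAt_of_tendsto'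
    (fun t _ => hasDerivAt_real_exp_neg_smul_exp B t)
    ((integrableOn_real_exp_neg_smul_exp hM).mul_const (1 - B)).neg
    (tendsto_real_exp_neg_smul_exp_atTop hM)
  rw [integral_neg,
    integral_mul_const_of_integrable (integrableOn_real_exp_neg_smul_exp hM)] at hftc
  simpa using hftc

theorem one_sub_mul_integral_real_exp_neg_smul_exp :
    (1 - B) * ∫ u in Ioi 0, Real.exp (-u) • exp (u • B) = 1 := by
  rw [← integral_const_mul_of_integrable (integrableOn_real_exp_neg_smul_exp hM)]
  simp_rw [(commute_one_sub_real_exp_neg_smul_exp B _).eq]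
  rw [integral_mul_const_of_integrable (integrableOn_real_exp_neg_smul_exp hM)]
  exact integral_real_exp_neg_smul_exp_mul_one_sub hM

omit [CompleteSpace 𝔸] in
theorem norm_integral_real_exp_neg_smul_exp_le :
    ‖∫ u in Ioi 0, Real.exp (-u) • exp (u • B)‖ ≤ M := by
  have hbound := norm_integral_le_of_norm_le ((integrableOn_exp_neg_Ioi 0).mul_const M)
    ((ae_restrict_iff' measurableSet_Ioi).2 (Eventually.of_forall
      fun u (hu : 0 < u) => norm_real_exp_neg_smul_exp_le hM hu.le))
  rwa [integral_mul_const, integral_exp_neg_Ioi_zero, one_mul] at hbound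

theorem norm_inverse_one_sub_le_of_norm_exp_smul_le : ‖Ring.inverse (1 - B)‖ ≤ M := by
  let R : 𝔸ˣ := ⟨1 - B, _, one_sub_mul_integral_real_exp_neg_smul_exp hM,
    integral_real_exp_neg_smul_exp_mul_one_sub hM⟩
  rw [show 1 - B = R from rfl, Ring.inverse_unit]
  exact norm_integral_real_exp_neg_smul_exp_le hM

end Laplace

theorem semigroupBounded_subset_abelSet_general
    {X : Type*} [NormedAddCommGroup X] [NormedSpace ℂ X] [CompleteSpace X]
    (Q : X →L[ℂ] X) (z : ℂ)
    (hz : Filter.IsBoundedUnder (· ≤ ·) Filter.atTop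
        (fun t : ℝ => ‖NormedSpace.exp (((t : ℂ) * z) • Q)‖)) :
    ∀ k : ℕ, Filter.IsBoundedUnder (· ≤ ·) Filter.atTop
        (fun s : ℝ => ‖(Ring.inverse (1 - ((s : ℂ) * z) • Q)) ^ k‖) := by
  have hsmul : ∀ t : ℝ, ((t : ℂ) * z) • Q = t • z • Q := fun t => by
    rw [mul_smul, Complex.coe_smul]
  simp_rw [hsmul] at hz ⊢
  have hcont : Continuous fun t : ℝ => ‖exp (t • z • Q)‖ := continuous_norm.comp <|
    continuous_iff_continuousAt.2 fun t => (hasDerivAt_exp_smul_const (z • Q) t).continuousAt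
  obtain ⟨M, hM⟩ := hcont.bddAbove_image_Ici_of_isBoundedUnder hz 0
  intro k
  refine isBoundedUnder_norm_pow ⟨M, eventually_map.2 ?_⟩ k
  filter_upwards [eventually_ge_atTop 0] with s hs
  refine norm_inverse_one_sub_le_of_norm_exp_smul_le fun u hu => ?_
  rw [smul_smul]
  exact hM ⟨u * s, mul_nonneg hu hs, rfl⟩

theorem semigroupBounded_subset_abelSet
    {X : Type*} [NormedAddCommGroup X] [NormedSpace ℂ X] [CompleteSpace X]
    (Q : X →L[ℂ] X) (hQ : spectrum ℂ Q = {0}) (z : ℂ)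
    (hz : Filter.IsBoundedUnder (· ≤ ·) Filter.atTop
        (fun t : ℝ => ‖NormedSpace.exp (((t : ℂ) * z) • Q)‖)) :
    ∀ k : ℕ, Filter.IsBoundedUnder (· ≤ ·) Filter.atTop
        (fun s : ℝ => ‖(Ring.inverse (1 - ((s : ℂ) * z) • Q)) ^ k‖) :=
  semigroupBounded_subset_abelSet_general Q z hz
end

section
/- Let Q be a bounded quasinilpotent operator on a complex Banach space X, and let z₁, z₂ ∈ B_Q with α, β ≥ 0, α + β = 1. Then α z₁ + β z₂ ∈ B_Q and moreover sup_j ‖(I + (αz₁+βz₂)Q)^j‖ ≤ (sup_j ‖(I+z₁Q)^j‖)·(sup_j ‖(I+z₂Q)^j‖). -/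
/-! Since `I + z₁Q` and `I + z₂Q` commute, expanding `(α(I + z₁Q) + β(I + z₂Q))ʲ` by the binomial
theorem and bounding each term `C(j,m) αᵐ βʲ⁻ᵐ (I + z₁Q)ᵐ (I + z₂Q)ʲ⁻ᵐ` by the power bounds `M₁`, `M₂`
of the two factors gives `‖(I + (αz₁ + βz₂)Q)ʲ‖ ≤ (α + β)ʲ M₁ M₂ = M₁ M₂`. -/

open Finset

theorem Commute.norm_add_pow_le {R : Type*} [SeminormedRing R] {a b : R} (h : Commute a b)
    (n : ℕ) : ‖(a + b) ^ n‖ ≤ ∑ m ∈ range (n + 1), n.choose m * (‖a ^ m‖ * ‖b ^ (n - m)‖) := by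
  rw [h.add_pow]
  refine (norm_sum_le _ _).trans (sum_le_sum fun m _ => ?_)
  rw [← (Nat.cast_commute _ _).eq, ← nsmul_eq_mul]
  exact (norm_nsmul_le ..).trans (by gcongr; exact norm_mul_le _ _)

theorem Commute.norm_smul_add_smul_pow_le {𝕜 R : Type*} [NormedField 𝕜] [SeminormedRing R]
    [NormedAlgebra 𝕜 R] {a b : R} (h : Commute a b) {M N : ℝ} (ha : ∀ k : ℕ, ‖a ^ k‖ ≤ M)
    (hb : ∀ k : ℕ, ‖b ^ k‖ ≤ N) (s t : 𝕜) (n : ℕ) :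
    ‖(s • a + t • b) ^ n‖ ≤ (‖s‖ + ‖t‖) ^ n * (M * N) := by
  have hM : 0 ≤ M := (norm_nonneg _).trans (ha 0)
  calc ‖(s • a + t • b) ^ n‖
      ≤ ∑ m ∈ range (n + 1), n.choose m * (‖(s • a) ^ m‖ * ‖(t • b) ^ (n - m)‖) :=
        ((h.smul_left s).smul_right t).norm_add_pow_le n
    _ ≤ ∑ m ∈ range (n + 1), ‖s‖ ^ m * ‖t‖ ^ (n - m) * n.choose m * (M * N) := by
        refine sum_le_sum fun m _ => ?_
        have hsa : ‖(s • a) ^ m‖ ≤ ‖s‖ ^ m * M := by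
          rw [smul_pow, norm_smul, norm_pow s]; gcongr; exact ha m
        have htb : ‖(t • b) ^ (n - m)‖ ≤ ‖t‖ ^ (n - m) * N := by
          rw [smul_pow, norm_smul, norm_pow t]; gcongr; exact hb (n - m)
        calc (n.choose m : ℝ) * (‖(s • a) ^ m‖ * ‖(t • b) ^ (n - m)‖)
            ≤ n.choose m * (‖s‖ ^ m * M * (‖t‖ ^ (n - m) * N)) := by gcongr
          _ = _ := by ring
    _ = (‖s‖ + ‖t‖) ^ n * (M * N) := by rw [← sum_mul, _root_.add_pow]

theorem one_add_convex_smul_eq {𝕜 A : Type*} [CommSemiring 𝕜] [Semiring A] [Algebra 𝕜 A]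
    {s t : 𝕜} (hst : s + t = 1) (x y : 𝕜) (q : A) :
    1 + (s * x + t * y) • q = s • (1 + x • q) + t • (1 + y • q) := by
  rw [smul_add, smul_add, smul_smul, smul_smul, add_smul, add_add_add_comm, ← add_smul s t, hst,
    one_smul]

theorem powerBounded_convex_combination_general
    {X : Type*} [NormedAddCommGroup X] [NormedSpace ℂ X]
    (Q : X →L[ℂ] X) (z₁ z₂ : ℂ) (α β : ℝ)
    (hα : 0 ≤ α) (hβ : 0 ≤ β) (hαβ : α + β = 1)
    (h₁ : BddAbove (Set.range fun j : ℕ => ‖(1 + z₁ • Q) ^ j‖))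
    (h₂ : BddAbove (Set.range fun j : ℕ => ‖(1 + z₂ • Q) ^ j‖)) :
    BddAbove (Set.range fun j : ℕ => ‖(1 + ((α : ℂ) * z₁ + (β : ℂ) * z₂) • Q) ^ j‖) ∧
    (⨆ j : ℕ, ‖(1 + ((α : ℂ) * z₁ + (β : ℂ) * z₂) • Q) ^ j‖) ≤
      (⨆ j : ℕ, ‖(1 + z₁ • Q) ^ j‖) * (⨆ j : ℕ, ‖(1 + z₂ • Q) ^ j‖) := by
  have hcomm : Commute (1 + z₁ • Q) (1 + z₂ • Q) :=
    (Commute.one_left _).add_left <| (Commute.one_right _).add_right <|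
      ((Commute.refl Q).smul_right z₂).smul_left z₁
  have hsum : (α : ℂ) + β = 1 := by exact_mod_cast hαβ
  have hnorms : ‖(α : ℂ)‖ + ‖(β : ℂ)‖ = 1 := by
    rw [Complex.norm_of_nonneg hα, Complex.norm_of_nonneg hβ, hαβ]
  have key : ∀ j : ℕ, ‖(1 + ((α : ℂ) * z₁ + (β : ℂ) * z₂) • Q) ^ j‖ ≤
      (⨆ j : ℕ, ‖(1 + z₁ • Q) ^ j‖) * (⨆ j : ℕ, ‖(1 + z₂ • Q) ^ j‖) := fun j => by
    simpa only [one_add_convex_smul_eq hsum, hnorms, one_pow, one_mul] using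
      hcomm.norm_smul_add_smul_pow_le (le_ciSup h₁) (le_ciSup h₂) (α : ℂ) β j
  exact ⟨⟨_, Set.forall_mem_range.2 key⟩, ciSup_le key⟩

theorem powerBounded_convex_combination
    {X : Type*} [NormedAddCommGroup X] [NormedSpace ℂ X] [CompleteSpace X]
    (Q : X →L[ℂ] X) (hQ : spectrum ℂ Q = {0}) (z₁ z₂ : ℂ) (α β : ℝ)
    (hα : 0 ≤ α) (hβ : 0 ≤ β) (hαβ : α + β = 1)
    (h₁ : BddAbove (Set.range fun j : ℕ => ‖(1 + z₁ • Q) ^ j‖))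
    (h₂ : BddAbove (Set.range fun j : ℕ => ‖(1 + z₂ • Q) ^ j‖)) :
    BddAbove (Set.range fun j : ℕ => ‖(1 + ((α : ℂ) * z₁ + (β : ℂ) * z₂) • Q) ^ j‖) ∧
    (⨆ j : ℕ, ‖(1 + ((α : ℂ) * z₁ + (β : ℂ) * z₂) • Q) ^ j‖) ≤
      (⨆ j : ℕ, ‖(1 + z₁ • Q) ^ j‖) * (⨆ j : ℕ, ‖(1 + z₂ • Q) ^ j‖) :=
  powerBounded_convex_combination_general Q z₁ z₂ α β hα hβ hαβ h₁ h₂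
end

section
/- Let Q be a bounded quasinilpotent operator on a complex Banach space X. Then the function z ↦ N_z := sup_{n ≥ 1} ‖(I + zQ)^n‖ is uniformly bounded on every closed triangle contained in the open interior of B_Q; in particular, on the closed triangle with vertices v₁, v₂, v₃ ∈ B_Q, N_z ≤ N_{v₁}·N_{v₂}·N_{v₃} for all z in the triangle. -/
/-!
For commuting `u, w` and scalars with `‖a‖ + ‖b‖ ≤ 1`, the binomial expansion of `(a u + b w)^n`
is dominated termwise by that of `(‖a‖ + ‖b‖)^n · sup ‖u^i‖ · sup ‖w^j‖`, so power bounds multiply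
along segments. The operators `1 + zQ` commute with each other and depend affinely on `z`, and a
point of the triangle lies on a segment from `v₁` to a point of the segment `[v₂, v₃]`; applying the
segment bound twice gives `N₁ N₂ N₃`. The bound must hold for all `n ≥ 0`, and `n = 0` is where
quasinilpotence enters: `1 ∈ σ(1 + vQ)` forces `1 ≤ ‖1 + vQ‖ ≤ N`.
-/

open Finset in
theorem Commute.norm_smul_add_smul_pow_le_s9 {𝕜 A : Type*} [NormedField 𝕜] [NormedRing A]
    [NormedAlgebra 𝕜 A] {u w : A} (h : Commute u w) {a b : 𝕜} (hab : ‖a‖ + ‖b‖ ≤ 1)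
    {M K : ℝ} (hu : ∀ n, ‖u ^ n‖ ≤ M) (hw : ∀ n, ‖w ^ n‖ ≤ K) (n : ℕ) :
    ‖(a • u + b • w) ^ n‖ ≤ M * K := by
  have hM : 0 ≤ M := (norm_nonneg _).trans (hu 0)
  rw [((h.smul_left a).smul_right b).add_pow']
  calc _ ≤ ∑ m ∈ antidiagonal n, n.choose m.1 • (‖a‖ ^ m.1 * ‖b‖ ^ m.2 * (M * K)) := by
        refine norm_sum_le_of_le _ fun m _ => norm_nsmul_le.trans ?_
        rw [nsmul_eq_mul, smul_pow, smul_pow, smul_mul_smul_comm]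
        gcongr
        calc _ ≤ ‖a ^ m.1 * b ^ m.2‖ * (‖u ^ m.1‖ * ‖w ^ m.2‖) :=
              (norm_smul_le _ _).trans (by gcongr; exact norm_mul_le _ _)
          _ ≤ _ := by
            rw [norm_mul, norm_pow, norm_pow]
            gcongr
            exacts [hu _, hw _]
    _ = (‖a‖ + ‖b‖) ^ n * (M * K) := by
        rw [(Commute.all ‖a‖ ‖b‖).add_pow', sum_mul]
        simp only [smul_mul_assoc]
    _ ≤ M * K := by
        have hK : 0 ≤ K := (norm_nonneg _).trans (hw 0)
        exact mul_le_of_le_one_left (by positivity) (pow_le_one₀ (by positivity) hab)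

theorem spectrum_one_add_smul_eq_one {𝕜 A : Type*} [Field 𝕜] [Ring A] [Algebra 𝕜 A] {Q : A}
    (hQ : spectrum 𝕜 Q = {0}) (v : 𝕜) : spectrum 𝕜 (1 + v • Q) = {1} := by
  cases subsingleton_or_nontrivial A
  · simp [spectrum.of_subsingleton] at hQ
  rw [← map_one (algebraMap 𝕜 A), ← spectrum.singleton_add_eq,
    spectrum.smul_eq_smul _ _ (by simp [hQ]), hQ]
  simp

theorem norm_pow_le_of_one_mem_spectrum {𝕜 A : Type*} [NormedField 𝕜] [NormedRing A]
    [NormedAlgebra 𝕜 A] [CompleteSpace A] (h1 : ‖(1 : A)‖ ≤ 1) {a : A}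
    (ha : (1 : 𝕜) ∈ spectrum 𝕜 a) {N : ℝ} (hN : ∀ n, 1 ≤ n → ‖a ^ n‖ ≤ N) (n : ℕ) :
    ‖a ^ n‖ ≤ N := by
  rcases n.eq_zero_or_pos with rfl | hn
  · calc ‖a ^ 0‖ ≤ 1 := by rwa [pow_zero]
      _ = ‖(1 : 𝕜)‖ := norm_one.symm
      _ ≤ ‖a‖ * ‖(1 : A)‖ := spectrum.norm_le_norm_mul_of_mem ha
      _ ≤ ‖a‖ := mul_le_of_le_one_right (norm_nonneg _) h1
      _ ≤ N := by simpa using hN 1 le_rfl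
  · exact hN n hn

theorem commute_one_add_smul {R A : Type*} [CommSemiring R] [Semiring A] [Algebra R A]
    (Q : A) (x y : R) : Commute (1 + x • Q) (1 + y • Q) :=
  (Commute.one_right _).add_right <|
    (Commute.one_left _).add_left (((Commute.refl Q).smul_left x).smul_right y)

theorem norm_one_add_smul_pow_le_of_mem_segment {A : Type*} [NormedRing A] [NormedAlgebra ℂ A]
    (Q : A) {x y z : ℂ} (hz : z ∈ segment ℝ x y) {M K : ℝ}
    (hx : ∀ n, ‖(1 + x • Q) ^ n‖ ≤ M) (hy : ∀ n, ‖(1 + y • Q) ^ n‖ ≤ K) (n : ℕ) :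
    ‖(1 + z • Q) ^ n‖ ≤ M * K := by
  obtain ⟨a, b, ha, hb, hab, rfl⟩ := hz
  have hsplit : 1 + (a • x + b • y) • Q = (a : ℂ) • (1 + x • Q) + (b : ℂ) • (1 + y • Q) := by
    have hab' : (a : ℂ) + b = 1 := by exact_mod_cast hab
    simp only [Complex.real_smul]
    match_scalars
    · linear_combination hab'.symm
    · ring
  rw [hsplit]
  exact (commute_one_add_smul Q x y).norm_smul_add_smul_pow_le_s9
    (by simpa [abs_of_nonneg ha, abs_of_nonneg hb] using hab.le) hx hy n

theorem powerBound_on_triangle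
    {X : Type*} [NormedAddCommGroup X] [NormedSpace ℂ X] [CompleteSpace X]
    (Q : X →L[ℂ] X) (hQ : spectrum ℂ Q = {0})
    (v₁ v₂ v₃ : ℂ) (N₁ N₂ N₃ : ℝ)
    (h₁ : ∀ n : ℕ, 1 ≤ n → ‖(1 + v₁ • Q) ^ n‖ ≤ N₁)
    (h₂ : ∀ n : ℕ, 1 ≤ n → ‖(1 + v₂ • Q) ^ n‖ ≤ N₂)
    (h₃ : ∀ n : ℕ, 1 ≤ n → ‖(1 + v₃ • Q) ^ n‖ ≤ N₃) :
    ∀ z ∈ convexHull ℝ ({v₁, v₂, v₃} : Set ℂ), ∀ n : ℕ, 1 ≤ n →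
      ‖(1 + z • Q) ^ n‖ ≤ N₁ * N₂ * N₃ := by
  have hpow {v : ℂ} {N : ℝ} (h : ∀ n : ℕ, 1 ≤ n → ‖(1 + v • Q) ^ n‖ ≤ N) (n : ℕ) :
      ‖(1 + v • Q) ^ n‖ ≤ N :=
    norm_pow_le_of_one_mem_spectrum ContinuousLinearMap.norm_id_le
      (by rw [spectrum_one_add_smul_eq_one hQ v]; exact Set.mem_singleton 1) h n
  intro z hz n _
  rw [convexHull_insert (Set.insert_nonempty _ _), convexHull_pair, mem_convexJoin] at hz
  obtain ⟨_, rfl, w, hw, hzw⟩ := hz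
  rw [mul_assoc]
  exact norm_one_add_smul_pow_le_of_mem_segment Q hzw (hpow h₁)
    (norm_one_add_smul_pow_le_of_mem_segment Q hw (hpow h₂) (hpow h₃)) n
end

section
/- Let Q be a bounded quasinilpotent operator on a complex Banach space X, and suppose z ∈ T_Q^{1/2}, i.e., M := sup_{j≥0} (j+1)^{1/2}‖zQ(I+zQ)^j‖ < ∞. Then there is a constant C_r = √π · M such that for all s ≥ 0: ‖(I − szQ)^{-1}‖ ≤ C_r (s+1)^{1/2} + 1. -/
/-!
Put `A = z • Q` and `ζ = s / (s + 1)`, so that `1 - s A = (s + 1) (1 - ζ (1 + A))`. The powers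
`(1 + A) ^ j` need not be bounded, so instead of the geometric series of `ζ (1 + A)` one uses
`1 + ∑ ζ ^ (j + 1) A (1 + A) ^ j`, whose terms are bounded by hypothesis; telescoping with
`(1 + A) A (1 + A) ^ j = A (1 + A) ^ (j + 1)` shows that it inverts `1 - s A`. The bound
`‖A (1 + A) ^ j‖ ≤ M / √(j + 1)` then gives `‖(1 - s A)⁻¹‖ ≤ 1 + M ∑ ξ ^ k / √k` with
`ξ = s / (s + 1)`, and comparing this sum with `∫₀^∞ t ^ (-1/2) e ^ (-c t) dt = √(π / c)`, where
`c = -log ξ ≥ 1 / (s + 1)`, gives `√π √(s + 1)`.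
-/

open MeasureTheory Set Real

/-- `AntitoneOn.tsum_add_one_le_integral` needs `f` antitone on `Ici 0`, which fails when `f`
blows up at `0`; here the first term is compared with the integral over `(0, 1]` by hand. -/
theorem AntitoneOn.tsum_add_one_le_setIntegral_Ioi {f : ℝ → ℝ} (anti : AntitoneOn f (Ioi 0))
    (integrable : IntegrableOn f (Ioi 0)) (nonneg : ∀ t ∈ Ioi 0, 0 ≤ f t) :
    ∑' n : ℕ, f (n + 1) ≤ ∫ t in Ioi 0, f t := by
  have integrable₀₁ : IntegrableOn f (Ioc 0 1) := integrable.mono_set Ioc_subset_Ioi_self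
  have integrable₁ : IntegrableOn f (Ioi ((1 : ℕ) : ℝ)) :=
    integrable.mono_set (Ioi_subset_Ioi (by simp))
  have anti₁ : AntitoneOn f (Ici ((1 : ℕ) : ℝ)) :=
    anti.mono fun t ht => lt_of_lt_of_le one_pos (by simpa using ht)
  have nonneg₁ : ∀ t ∈ Ioi ((1 : ℕ) : ℝ), 0 ≤ f t :=
    fun t ht => nonneg t (lt_trans one_pos (by simpa using ht))
  have hsum : Summable fun n : ℕ => f (n + 1) := by
    exact_mod_cast (summable_nat_add_iff 1).mpr
      (anti₁.summable_of_integrableOn_Ioi integrable₁ nonneg₁)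
  have htail : ∑' n : ℕ, f (n + 1 + 1) ≤ ∫ t in Ioi 1, f t := by
    exact_mod_cast anti₁.tsum_comp_add_le_integral 1 integrable₁ nonneg₁
  have hhead : f 1 ≤ ∫ t in Ioc 0 1, f t := by
    calc f 1 = ∫ _ in Ioc (0 : ℝ) 1, f 1 := by simp
      _ ≤ ∫ t in Ioc 0 1, f t := setIntegral_mono_on (integrableOn_const (by simp)) integrable₀₁
          measurableSet_Ioc fun t ht => anti ht.1 (by norm_num) ht.2
  calc ∑' n : ℕ, f (n + 1) = f 1 + ∑' n : ℕ, f (n + 1 + 1) := by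
        rw [hsum.tsum_eq_zero_add]; push_cast; ring_nf
    _ ≤ (∫ t in Ioc 0 1, f t) + ∫ t in Ioi 1, f t := add_le_add hhead htail
    _ = ∫ t in Ioi 0, f t := by
        rw [← setIntegral_union Ioc_disjoint_Ioi_same measurableSet_Ioi integrable₀₁
          (integrable.mono_set (Ioi_subset_Ioi zero_le_one)), Ioc_union_Ioi_eq_Ioi zero_le_one]

theorem tsum_pow_succ_div_sqrt_le {ξ : ℝ} (hξ₀ : 0 < ξ) (hξ₁ : ξ < 1) :
    ∑' n : ℕ, ξ ^ (n + 1) / √(n + 1) ≤ √(π / -log ξ) := by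
  set c := -log ξ with hc_def
  have hc : 0 < c := neg_pos.mpr (log_neg hξ₀ hξ₁)
  set f : ℝ → ℝ := fun t => t ^ ((1 / 2 : ℝ) - 1) * exp (-(c * t))
  have hf : ∀ n : ℕ, f (n + 1) = ξ ^ (n + 1) / √(n + 1) := by
    intro n
    have : exp (-(c * (n + 1))) = ξ ^ (n + 1) := by
      rw [← exp_log (pow_pos hξ₀ _), log_pow, hc_def]; push_cast; ring_nf
    simp only [f, this, sqrt_eq_rpow, div_eq_mul_inv, ← rpow_neg (by positivity : (0:ℝ) ≤ n + 1)]
    norm_num [mul_comm]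
  have anti : AntitoneOn f (Ioi 0) := fun x hx y _ hxy =>
    mul_le_mul (rpow_le_rpow_of_nonpos hx hxy (by norm_num))
      (exp_le_exp.mpr (by nlinarith)) (exp_pos _).le (rpow_nonneg (le_of_lt hx) _)
  have integrable : IntegrableOn f (Ioi 0) := by
    simpa [f, neg_mul] using integrableOn_rpow_mul_exp_neg_mul_rpow
      (p := 1) (s := (1 / 2 : ℝ) - 1) (by norm_num) one_pos hc
  have hint : ∫ t in Ioi 0, f t = √(π / c) := by
    rw [integral_rpow_mul_exp_neg_mul_Ioi one_half_pos hc, Gamma_one_half_eq, sqrt_div' _ hc.le,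
      one_div, sqrt_eq_rpow, inv_rpow hc.le, sqrt_eq_rpow]
    ring
  simp_rw [← hf, ← hint]
  exact anti.tsum_add_one_le_setIntegral_Ioi integrable fun t ht =>
    mul_nonneg (rpow_nonneg (le_of_lt ht) _) (exp_pos _).le

theorem tsum_div_add_one_pow_succ_div_sqrt_le {s : ℝ} (hs : 0 ≤ s) :
    ∑' n : ℕ, (s / (s + 1)) ^ (n + 1) / √(n + 1) ≤ √π * √(s + 1) := by
  rcases hs.eq_or_lt with rfl | hs
  · simp
  have hξ₀ : 0 < s / (s + 1) := by positivity
  have hξ₁ : s / (s + 1) < 1 := (div_lt_one (by positivity)).mpr (lt_add_one s)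
  have hlog : 1 / (s + 1) ≤ -log (s / (s + 1)) := by
    have := log_le_sub_one_of_pos hξ₀
    have : s / (s + 1) - 1 = -(1 / (s + 1)) := by field_simp; ring
    linarith
  calc _ ≤ √(π / -log (s / (s + 1))) := tsum_pow_succ_div_sqrt_le hξ₀ hξ₁
    _ ≤ √(π / (1 / (s + 1))) := by gcongr
    _ = √π * √(s + 1) := by rw [div_div_eq_mul_div, div_one, sqrt_mul pi_pos.le]

section ResolventSeries

variable {𝕜 R : Type*} [NormedField 𝕜] [NormedRing R] [NormedAlgebra 𝕜 R]

noncomputable def resolventSeries (ζ : 𝕜) (A : R) : R :=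
  ∑' j : ℕ, ζ ^ (j + 1) • (A * (1 + A) ^ j)

lemma summable_resolventSeries [CompleteSpace R] {ζ : 𝕜} (hζ : ‖ζ‖ < 1) {A : R} {B : ℝ}
    (hB : ∀ j : ℕ, ‖A * (1 + A) ^ j‖ ≤ B) :
    Summable fun j : ℕ => ζ ^ (j + 1) • (A * (1 + A) ^ j) := by
  refine .of_norm_bounded ((summable_geometric_of_lt_one (norm_nonneg ζ) hζ).mul_left (‖ζ‖ * B))
    fun j => ?_
  calc ‖ζ ^ (j + 1) • (A * (1 + A) ^ j)‖ = ‖ζ‖ ^ (j + 1) * ‖A * (1 + A) ^ j‖ := by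
        rw [norm_smul, norm_pow]
    _ ≤ ‖ζ‖ ^ (j + 1) * B := by gcongr; exact hB j
    _ = ‖ζ‖ * B * ‖ζ‖ ^ j := by ring

lemma one_sub_smul_one_add_mul_resolventSeries [CompleteSpace R] {ζ : 𝕜} (hζ : ‖ζ‖ < 1)
    {A : R} {B : ℝ} (hB : ∀ j : ℕ, ‖A * (1 + A) ^ j‖ ≤ B) :
    (1 - ζ • (1 + A)) * resolventSeries ζ A = ζ • A := by
  have hsum := summable_resolventSeries hζ hB
  have hshift : ζ • (1 + A) * resolventSeries ζ A =
      ∑' j : ℕ, ζ ^ (j + 1 + 1) • (A * (1 + A) ^ (j + 1)) := by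
    rw [resolventSeries, ← hsum.tsum_mul_left]
    refine tsum_congr fun j => ?_
    rw [smul_mul_smul_comm, ← pow_succ', ← mul_assoc,
      ((Commute.one_left A).add_left (Commute.refl A)).eq, mul_assoc, ← pow_succ']
  rw [sub_mul, one_mul, hshift, resolventSeries, hsum.tsum_eq_zero_add]
  simp

lemma commute_resolventSeries (ζ : 𝕜) (A : R) : Commute A (resolventSeries ζ A) :=
  Commute.tsum_right A fun j => ((Commute.refl A).mul_right
    (((Commute.one_right A).add_right (Commute.refl A)).pow_right j)).smul_right _

theorem inverse_one_sub_smul_eq_one_add_resolventSeries [CompleteSpace R] {s : 𝕜}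
    (hs : s + 1 ≠ 0) (hζ : ‖s / (s + 1)‖ < 1) {A : R} {B : ℝ}
    (hB : ∀ j : ℕ, ‖A * (1 + A) ^ j‖ ≤ B) :
    Ring.inverse (1 - s • A) = 1 + resolventSeries (s / (s + 1)) A := by
  set ζ := s / (s + 1)
  have hsζ : (s + 1) * ζ = s := mul_div_cancel₀ s hs
  have hfactor : 1 - s • A = (s + 1) • (1 - ζ • (1 + A)) := by
    linear_combination (norm := module) hsζ • (1 + A)
  have hright : (1 - s • A) * (1 + resolventSeries ζ A) = 1 := by
    rw [hfactor, smul_mul_assoc, mul_add, mul_one, one_sub_smul_one_add_mul_resolventSeries hζ hB]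
    linear_combination (norm := module) -hsζ • (1 : R)
  have hcomm : Commute (1 - s • A) (1 + resolventSeries ζ A) :=
    (Commute.one_right _).add_right
      ((Commute.one_left _).sub_left ((commute_resolventSeries ζ A).smul_left s))
  exact Ring.inverse_unit ⟨_, _, hright, hcomm.eq ▸ hright⟩

lemma norm_resolventSeries_le {ζ : 𝕜} (hζ : ‖ζ‖ < 1) {A : R} {M : ℝ}
    (hM : ∀ j : ℕ, √(j + 1) * ‖A * (1 + A) ^ j‖ ≤ M) :
    ‖resolventSeries ζ A‖ ≤ M * ∑' j : ℕ, ‖ζ‖ ^ (j + 1) / √(j + 1) := by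
  have hterm (j : ℕ) : ‖ζ ^ (j + 1) • (A * (1 + A) ^ j)‖ ≤ M * (‖ζ‖ ^ (j + 1) / √(j + 1)) :=
    calc ‖ζ ^ (j + 1) • (A * (1 + A) ^ j)‖ = ‖ζ‖ ^ (j + 1) * ‖A * (1 + A) ^ j‖ := by
          rw [norm_smul, norm_pow]
      _ ≤ ‖ζ‖ ^ (j + 1) * (M / √(j + 1)) := by
          gcongr; exact (le_div_iff₀' (by positivity)).mpr (hM j)
      _ = M * (‖ζ‖ ^ (j + 1) / √(j + 1)) := by ring
  have hsum : Summable fun j : ℕ => ‖ζ‖ ^ (j + 1) / √(j + 1) :=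
    .of_nonneg_of_le (fun j => by positivity)
      (fun j => div_le_self (by positivity) (one_le_sqrt.mpr (by simp)))
      ((summable_nat_add_iff 1).mpr (summable_geometric_of_lt_one (norm_nonneg ζ) hζ))
  have hnorm := Summable.of_nonneg_of_le (fun j => norm_nonneg _) hterm (hsum.mul_left M)
  calc ‖resolventSeries ζ A‖ ≤ ∑' j : ℕ, ‖ζ ^ (j + 1) • (A * (1 + A) ^ j)‖ :=
        norm_tsum_le_tsum_norm hnorm
    _ ≤ ∑' j : ℕ, M * (‖ζ‖ ^ (j + 1) / √(j + 1)) := hnorm.tsum_le_tsum hterm (hsum.mul_left M)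
    _ = M * ∑' j : ℕ, ‖ζ‖ ^ (j + 1) / √(j + 1) := tsum_mul_left

end ResolventSeries

theorem resolvent_growth_from_tauberian_half_general
    {X : Type*} [NormedAddCommGroup X] [NormedSpace ℂ X] [CompleteSpace X]
    (Q : X →L[ℂ] X) (z : ℂ) (M : ℝ)
    (hM : ∀ j : ℕ, Real.sqrt (j + 1) * ‖(z • Q) * (1 + z • Q) ^ j‖ ≤ M) :
    ∀ s : ℝ, 0 ≤ s →
      ‖Ring.inverse (1 - ((s : ℂ) * z) • Q)‖ ≤
        Real.sqrt Real.pi * M * Real.sqrt (s + 1) + 1 := by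
  intro s hs
  have hB (j : ℕ) : ‖(z • Q) * (1 + z • Q) ^ j‖ ≤ M :=
    (le_mul_of_one_le_left (norm_nonneg _) (one_le_sqrt.mpr (by simp))).trans (hM j)
  have hM₀ : 0 ≤ M := (mul_nonneg (sqrt_nonneg _) (norm_nonneg _)).trans (hM 0)
  have hone : ‖(1 : X →L[ℂ] X)‖ ≤ 1 := ContinuousLinearMap.norm_id_le
  have hζ : (s : ℂ) / (s + 1) = ((s / (s + 1) : ℝ) : ℂ) := by push_cast; rfl
  have hζ_norm : ‖(s : ℂ) / (s + 1)‖ = s / (s + 1) := by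
    rw [hζ, Complex.norm_real, norm_of_nonneg (by positivity)]
  have hζ_lt : ‖(s : ℂ) / (s + 1)‖ < 1 := by
    rw [hζ_norm, div_lt_one (by positivity)]; exact lt_add_one s
  have hs1 : (s : ℂ) + 1 ≠ 0 := by exact_mod_cast (by positivity : s + 1 ≠ 0)
  rw [mul_smul, inverse_one_sub_smul_eq_one_add_resolventSeries hs1 hζ_lt hB]
  calc ‖1 + resolventSeries ((s : ℂ) / (s + 1)) (z • Q)‖
      ≤ 1 + M * ∑' j : ℕ, (s / (s + 1)) ^ (j + 1) / √(j + 1) := by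
        grw [norm_add_le, hone, norm_resolventSeries_le hζ_lt hM, hζ_norm]
    _ ≤ 1 + M * (√π * √(s + 1)) := by
        grw [tsum_div_add_one_pow_succ_div_sqrt_le hs]
    _ = √π * M * √(s + 1) + 1 := by ring

theorem resolvent_growth_from_tauberian_half
    {X : Type*} [NormedAddCommGroup X] [NormedSpace ℂ X] [CompleteSpace X]
    (Q : X →L[ℂ] X) (hQ : spectrum ℂ Q = {0}) (z : ℂ) (M : ℝ)
    (hM : ∀ j : ℕ, Real.sqrt (j + 1) * ‖(z • Q) * (1 + z • Q) ^ j‖ ≤ M) :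
    ∀ s : ℝ, 0 ≤ s →
      ‖Ring.inverse (1 - ((s : ℂ) * z) • Q)‖ ≤
        Real.sqrt Real.pi * M * Real.sqrt (s + 1) + 1 :=
  resolvent_growth_from_tauberian_half_general Q z M hM
end

section
/- Let Q be a bounded quasinilpotent operator on a complex Banach space X, and suppose z ∈ T_Q, i.e., D := sup_{j≥0} (j+1)‖zQ(I+zQ)^j‖ < ∞. Then for all s > 0: ‖(I − szQ)^{-1}‖ ≤ D ln(s+1) + 1. -/
/-! Put `A = z • Q` and `ξ = s / (s + 1)`, so that `1 - s A = (1 - ξ)⁻¹ (1 - ξ (1 + A))`.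
The hypothesis gives `‖(1 + A)^n‖ ≤ 1 + n D`, so the Neumann series of `ξ (1 + A)` converges
although `‖ξ (1 + A)‖` may exceed `1`, and the inverse is `1 + ∑_{j ≥ 0} ξ^(j+1) A (1 + A)^j`.
Its `j`-th term has norm at most `D ξ^(j+1) / (j + 1)`, and these sum to
`-D log (1 - ξ) = D log (s + 1)`. -/

section

variable {R : Type*} [NormedRing R] {A : R} {D : ℝ}

theorem norm_one_add_pow_le (hA : ∀ j : ℕ, ‖A * (1 + A) ^ j‖ ≤ D) (n : ℕ) :
    ‖(1 + A) ^ n‖ ≤ ‖(1 : R)‖ + n * D := by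
  induction n with
  | zero => simp
  | succ n ih =>
    calc ‖(1 + A) ^ (n + 1)‖ = ‖(1 + A) ^ n + A * (1 + A) ^ n‖ := by
          rw [pow_succ', add_mul, one_mul]
      _ ≤ ‖(1 + A) ^ n‖ + ‖A * (1 + A) ^ n‖ := norm_add_le _ _
      _ ≤ ‖(1 : R)‖ + (n + 1 : ℕ) * D := by push_cast; linarith [hA n]

variable {𝕜 : Type*} [NormedField 𝕜] [NormedAlgebra 𝕜 R] {ξ : 𝕜}

theorem one_sub_div_one_sub_smul (hξ : ξ ≠ 1) :
    1 - (ξ / (1 - ξ)) • A = (1 - ξ)⁻¹ • (1 - ξ • (1 + A)) := by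
  have hsplit : 1 - ξ • (1 + A) = (1 - ξ) • (1 : R) - ξ • A := by
    rw [smul_add, sub_smul, one_smul]; abel
  rw [hsplit, smul_sub, smul_smul, smul_smul, inv_mul_cancel₀ (sub_ne_zero.mpr hξ.symm),
    one_smul, div_eq_inv_mul]

variable [CompleteSpace R]

theorem summable_smul_one_add_pow (hA : ∀ j : ℕ, ‖A * (1 + A) ^ j‖ ≤ D) (hξ : ‖ξ‖ < 1) :
    Summable fun n : ℕ => (ξ • (1 + A)) ^ n := by
  have hgeom : Summable fun n : ℕ => ‖(1 : R)‖ * ‖ξ‖ ^ n + D * ((n : ℝ) ^ 1 * ‖ξ‖ ^ n) :=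
    ((summable_geometric_of_lt_one (norm_nonneg ξ) hξ).mul_left _).add
      ((summable_pow_mul_geometric_of_norm_lt_one 1 (by rwa [norm_norm])).mul_left D)
  refine .of_norm_bounded hgeom fun n => ?_
  calc ‖(ξ • (1 + A)) ^ n‖ = ‖ξ‖ ^ n * ‖(1 + A) ^ n‖ := by rw [smul_pow, norm_smul, norm_pow]
    _ ≤ ‖ξ‖ ^ n * (‖(1 : R)‖ + n * D) := by gcongr; exact norm_one_add_pow_le hA n
    _ = _ := by ring

theorem inverse_one_sub_div_one_sub_smul (hA : ∀ j : ℕ, ‖A * (1 + A) ^ j‖ ≤ D)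
    (hξ : ‖ξ‖ < 1) :
    Ring.inverse (1 - (ξ / (1 - ξ)) • A) = 1 + ξ • A * ∑' n : ℕ, (ξ • (1 + A)) ^ n := by
  have hξ1 : ξ ≠ 1 := by rintro rfl; simp at hξ
  set y := ξ • (1 + A)
  have hsum := summable_smul_one_add_pow hA hξ
  have hcomm : Commute (ξ • A) (1 - y) :=
    (Commute.one_right _).sub_right
      ((((Commute.one_right A).add_right (Commute.refl A)).smul_right ξ).smul_left ξ)
  have hscalar : (1 - ξ)⁻¹ • (1 - y + ξ • A) = 1 := by
    have h : 1 - y + ξ • A = (1 - ξ) • (1 : R) := by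
      simp only [y, smul_add, sub_smul, one_smul]; abel
    rw [h, smul_smul, inv_mul_cancel₀ (sub_ne_zero.mpr hξ1.symm), one_smul]
  refine Ring.inverse_unit ⟨_, _, ?_, ?_⟩
  · rw [one_sub_div_one_sub_smul hξ1, smul_mul_assoc, mul_add, mul_one, ← mul_assoc,
      ← hcomm.eq, mul_assoc, hsum.one_sub_mul_tsum_pow, mul_one, hscalar]
  · rw [one_sub_div_one_sub_smul hξ1, mul_smul_comm, add_mul, one_mul, mul_assoc,
      hsum.tsum_pow_mul_one_sub, mul_one, hscalar]

theorem norm_inverse_one_sub_div_one_sub_smul_le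
    (hA : ∀ j : ℕ, ((j : ℝ) + 1) * ‖A * (1 + A) ^ j‖ ≤ D) (hξ : ‖ξ‖ < 1) :
    ‖Ring.inverse (1 - (ξ / (1 - ξ)) • A)‖ ≤ ‖(1 : R)‖ - D * Real.log (1 - ‖ξ‖) := by
  have hAj (j : ℕ) : ‖A * (1 + A) ^ j‖ ≤ D / ((j : ℝ) + 1) := by
    rw [le_div_iff₀ (by positivity), mul_comm]; exact hA j
  have hD : 0 ≤ D := le_trans (by positivity) (hA 0)
  have hAD (j : ℕ) : ‖A * (1 + A) ^ j‖ ≤ D :=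
    (hAj j).trans (div_le_self hD (by simp))
  have hT : HasSum (fun j : ℕ => ξ ^ (j + 1) • (A * (1 + A) ^ j))
      (ξ • A * ∑' n : ℕ, (ξ • (1 + A)) ^ n) := by
    have h := (summable_smul_one_add_pow hAD hξ).hasSum.mul_left (ξ • A)
    simp_rw [smul_pow, smul_mul_smul_comm, ← pow_succ'] at h ⊢
    exact h
  have hlog : HasSum (fun j : ℕ => D * (‖ξ‖ ^ (j + 1) / ((j : ℝ) + 1)))
      (-(D * Real.log (1 - ‖ξ‖))) := by
    simpa using (Real.hasSum_pow_div_log_of_abs_lt_one (by rwa [abs_norm])).mul_left D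
  have hTnorm := hT.norm_le_of_bounded hlog fun j => by
    calc ‖ξ ^ (j + 1) • (A * (1 + A) ^ j)‖ = ‖ξ‖ ^ (j + 1) * ‖A * (1 + A) ^ j‖ := by
          rw [norm_smul, norm_pow]
      _ ≤ ‖ξ‖ ^ (j + 1) * (D / ((j : ℝ) + 1)) := by gcongr; exact hAj j
      _ = _ := by ring
  rw [inverse_one_sub_div_one_sub_smul hAD hξ]
  linarith [norm_add_le (1 : R) (ξ • A * ∑' n : ℕ, (ξ • (1 + A)) ^ n)]

end

theorem resolvent_log_growth_from_tauberian_general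
    {X : Type*} [NormedAddCommGroup X] [NormedSpace ℂ X] [CompleteSpace X]
    (Q : X →L[ℂ] X) (z : ℂ) (D : ℝ)
    (hD : ∀ j : ℕ, ((j : ℝ) + 1) * ‖(z • Q) * (1 + z • Q) ^ j‖ ≤ D) :
    ∀ s : ℝ, 0 < s →
      ‖Ring.inverse (1 - ((s : ℂ) * z) • Q)‖ ≤ D * Real.log (s + 1) + 1 := by
  intro s hs
  have hs1 : 0 < s + 1 := by linarith
  set ξ : ℂ := ((s / (s + 1) : ℝ) : ℂ)
  have hξ : ‖ξ‖ = s / (s + 1) := by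
    rw [Complex.norm_real, Real.norm_of_nonneg (by positivity)]
  have hξs : ξ / (1 - ξ) = s := by
    have : (s : ℂ) + 1 ≠ 0 := by exact_mod_cast hs1.ne'
    simp only [ξ]; push_cast; field_simp; ring
  have hlog : Real.log (1 - ‖ξ‖) = -Real.log (s + 1) := by
    rw [hξ, show 1 - s / (s + 1) = (s + 1)⁻¹ by field_simp; ring, Real.log_inv]
  have hbound := norm_inverse_one_sub_div_one_sub_smul_le hD
    (show ‖ξ‖ < 1 by rw [hξ, div_lt_one hs1]; linarith)
  rw [hξs, hlog, mul_neg, sub_neg_eq_add] at hbound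
  rw [mul_smul]
  have hone : ‖(1 : X →L[ℂ] X)‖ ≤ 1 := ContinuousLinearMap.norm_id_le
  linarith

theorem resolvent_log_growth_from_tauberian
    {X : Type*} [NormedAddCommGroup X] [NormedSpace ℂ X] [CompleteSpace X]
    (Q : X →L[ℂ] X) (hQ : spectrum ℂ Q = {0}) (z : ℂ) (D : ℝ)
    (hD : ∀ j : ℕ, ((j : ℝ) + 1) * ‖(z • Q) * (1 + z • Q) ^ j‖ ≤ D) :
    ∀ s : ℝ, 0 < s →
      ‖Ring.inverse (1 - ((s : ℂ) * z) • Q)‖ ≤ D * Real.log (s + 1) + 1 :=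
  resolvent_log_growth_from_tauberian_general Q z D hD
end

section
/- Let Q be a bounded quasinilpotent operator on a complex Banach space X. Suppose M := sup_{Re s ≥ 0} ‖(I − szQ)^{-1}‖ < ∞ for some z with zQ ≠ 0, and set α := 1/(2M‖zQ‖). Then ‖(I − szQ)^{-1}‖ ≤ 2M for all s ∈ ℂ with Re s > −α. -/
/-!
Quasinilpotence makes every `I - wQ` invertible, so `M` bounds genuine inverses rather than the
junk value `Ring.inverse _ = 0`. Write `s = iy + x` with `x = Re s < 0`. On the imaginary axis
`‖(I - iyzQ)⁻¹‖ ≤ M`, and `I - szQ = (I - iyzQ) - xzQ` is a perturbation of it whose relative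
size `‖(I - iyzQ)⁻¹ xzQ‖ ≤ M |x| ‖zQ‖` stays at most `1/2` as long as `|x| < α`; the Neumann
series then bounds the inverse of the perturbed operator by `2M`.
-/

open Ring

theorem isUnit_one_sub_smul_of_spectrum_subset_zero {𝕜 A : Type*} [Field 𝕜] [Ring A]
    [Algebra 𝕜 A] {a : A} (ha : spectrum 𝕜 a ⊆ {0}) (w : 𝕜) : IsUnit (1 - w • a) := by
  rcases eq_or_ne w 0 with rfl | hw
  · simp
  have hunit : IsUnit (algebraMap 𝕜 A w⁻¹ - a) :=
    spectrum.notMem_iff.mp fun h => inv_ne_zero hw (ha h)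
  have hfactor : 1 - w • a = algebraMap 𝕜 A w * (algebraMap 𝕜 A w⁻¹ - a) := by
    rw [mul_sub, ← map_mul, mul_inv_cancel₀ hw, map_one, Algebra.smul_def]
  rw [hfactor]
  exact ((IsUnit.mk0 w hw).map (algebraMap 𝕜 A)).mul hunit

section NormedRing

variable {R : Type*} [NormedRing R] [HasSummableGeomSeries R]

theorem norm_inverse_one_sub_le (h1 : ‖(1 : R)‖ ≤ 1) {b : R} (hb : ‖b‖ < 1) :
    ‖inverse (1 - b)‖ ≤ (1 - ‖b‖)⁻¹ := by
  rw [← geom_series_eq_inverse b hb]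
  linarith [tsum_geometric_le_of_norm_lt_one b hb]

theorem norm_inverse_sub_le (h1 : ‖(1 : R)‖ ≤ 1) {a p : R} (ha : IsUnit a)
    (hp : ‖inverse a * p‖ < 1) :
    ‖inverse (a - p)‖ ≤ (1 - ‖inverse a * p‖)⁻¹ * ‖inverse a‖ := by
  have hfactor : a - p = a * (1 - inverse a * p) := by
    rw [mul_sub, mul_one, mul_inverse_cancel_left _ _ ha]
  rw [hfactor, inverse_mul (Or.inl ha)]
  calc ‖inverse (1 - inverse a * p) * inverse a‖
      ≤ ‖inverse (1 - inverse a * p)‖ * ‖inverse a‖ := norm_mul_le _ _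
    _ ≤ (1 - ‖inverse a * p‖)⁻¹ * ‖inverse a‖ := by
      gcongr
      exact norm_inverse_one_sub_le h1 hp

theorem norm_inverse_sub_le_two_mul (h1 : ‖(1 : R)‖ ≤ 1) {a p : R} {M : ℝ} (ha : IsUnit a)
    (hM : ‖inverse a‖ ≤ M) (hp : 2 * M * ‖p‖ ≤ 1) : ‖inverse (a - p)‖ ≤ 2 * M := by
  have hsmall : ‖inverse a * p‖ ≤ 1 / 2 := by
    have hM0 : 0 ≤ M := (norm_nonneg _).trans hM
    calc ‖inverse a * p‖ ≤ M * ‖p‖ := (norm_mul_le _ _).trans (by gcongr)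
      _ ≤ 1 / 2 := by linarith
  have hneumann : (1 - ‖inverse a * p‖)⁻¹ ≤ 2 := inv_le_of_inv_le₀ two_pos (by linarith)
  calc ‖inverse (a - p)‖ ≤ (1 - ‖inverse a * p‖)⁻¹ * ‖inverse a‖ :=
        norm_inverse_sub_le h1 ha (by linarith)
    _ ≤ 2 * M := mul_le_mul hneumann hM (norm_nonneg _) zero_le_two

end NormedRing

theorem resolvent_bound_extends_left_general
    {X : Type*} [NormedAddCommGroup X] [NormedSpace ℂ X] [CompleteSpace X]
    (Q : X →L[ℂ] X) (hQ : spectrum ℂ Q = {0}) (z : ℂ) (M : ℝ)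
    (hM : ∀ s : ℂ, 0 ≤ s.re → ‖Ring.inverse (1 - (s * z) • Q)‖ ≤ M) :
    ∀ s : ℂ, -(1 / (2 * M * ‖z • Q‖)) < s.re →
      ‖Ring.inverse (1 - (s * z) • Q)‖ ≤ 2 * M := by
  intro s hs
  have hM0 : 0 ≤ M := (norm_nonneg _).trans (hM 0 le_rfl)
  rcases le_or_gt 0 s.re with hre | hre
  · linarith [hM s hre]
  set t : ℂ := s.im * Complex.I
  have hsplit : 1 - (s * z) • Q = (1 - (t * z) • Q) - ((s.re : ℂ) * z) • Q := by
    rw [sub_sub, ← add_smul, ← add_mul]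
    congr 3
    apply Complex.ext <;> simp [t]
  have hα : 0 < 2 * M * ‖z • Q‖ := one_div_pos.mp (by linarith)
  have hsmall : 2 * M * ‖((s.re : ℂ) * z) • Q‖ ≤ 1 := by
    rw [mul_smul, norm_smul, Complex.norm_real, Real.norm_eq_abs, abs_of_neg hre]
    linarith [(lt_div_iff₀ hα).mp (neg_lt.mp hs)]
  rw [hsplit]
  exact norm_inverse_sub_le_two_mul ContinuousLinearMap.norm_id_le
    (isUnit_one_sub_smul_of_spectrum_subset_zero hQ.le _) (hM t (by simp [t])) hsmall

theorem resolvent_bound_extends_left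
    {X : Type*} [NormedAddCommGroup X] [NormedSpace ℂ X] [CompleteSpace X]
    (Q : X →L[ℂ] X) (hQ : spectrum ℂ Q = {0}) (z : ℂ) (M : ℝ)
    (hzQ : z • Q ≠ 0)
    (hM : ∀ s : ℂ, 0 ≤ s.re → ‖Ring.inverse (1 - (s * z) • Q)‖ ≤ M) :
    ∀ s : ℂ, -(1 / (2 * M * ‖z • Q‖)) < s.re →
      ‖Ring.inverse (1 - (s * z) • Q)‖ ≤ 2 * M :=
  resolvent_bound_extends_left_general Q hQ z M hM
end

section
/- Let Q be a bounded quasinilpotent operator on a complex Banach space X and z ∈ G_Q (i.e., sup_{t≥0} ‖e^{tzQ}‖ < ∞). Set T_z := (I − zQ)^{-1}. Then sup_{k∈ℕ} (k+1)^{1/2} ‖(I − T_z) T_z^k‖ < ∞. -/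
/-!
Write `T = (1 - zQ)⁻¹` and `S = (1 - zQ/2)⁻¹`. From `(1 + T) S = 2T`, with everything commuting,
`(1 - T) Tᵏ = 2⁻ᵏ (1 - T) (1 + T)ᵏ Sᵏ`.

If `‖exp (tB)‖ ≤ C` for `t ≥ 0`, integration by parts gives
`(1 - B)⁻ⁿ⁻¹ = ∫₀^∞ tⁿ e⁻ᵗ / n! · exp (tB) dt`, an average of `exp (tB)`, so every power of
`(1 - B)⁻¹` has norm at most `C`; this applies to `T` and to `S`.

Finally `(k + 1) (1 - T) (1 + T)ᵏ = ∑ C(k+1, i) (j - i) Tⁱ` over `i + j = k + 1`, and by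
Cauchy–Schwarz against the binomial weights together with the binomial variance
`∑ C(n, i) (j - i)² = n 2ⁿ`, the coefficients have absolute sum at most `2ᵏ⁺¹ √(k + 1)`.
Hence `√(k + 1) ‖(1 - T) Tᵏ‖ ≤ 2 C²`.
-/

open Finset Set Filter Topology MeasureTheory NormedSpace
open scoped Nat

theorem Finset.Nat.sum_antidiagonal_choose_succ_nsmul_symm {M : Type*} [AddCommMonoid M]
    (f : ℕ → ℕ → M) (n : ℕ) :
    ∑ p ∈ antidiagonal (n + 1), (n + 1).choose p.1 • f p.1 p.2 =
      ∑ p ∈ antidiagonal n, n.choose p.1 • (f p.1 (p.2 + 1) + f (p.1 + 1) p.2) := by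
  rw [sum_antidiagonal_choose_succ_nsmul, ← sum_add_distrib]
  refine sum_congr rfl fun p hp => ?_
  rw [Nat.choose_symm_of_eq_add (mem_antidiagonal.1 hp).symm, smul_add]

theorem Finset.Nat.sum_antidiagonal_choose (n : ℕ) :
    ∑ p ∈ antidiagonal n, (n.choose p.1 : ℝ) = 2 ^ n := by
  rw [Finset.Nat.sum_antidiagonal_eq_sum_range_succ_mk]
  exact_mod_cast Nat.sum_range_choose n

theorem Finset.Nat.sum_antidiagonal_choose_mul_sub_sq (n : ℕ) :
    ∑ p ∈ antidiagonal n, n.choose p.1 * ((p.2 : ℝ) - p.1) ^ 2 = n * 2 ^ n := by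
  induction n with
  | zero => simp
  | succ n ih =>
    have := sum_antidiagonal_choose_succ_nsmul_symm (fun i j => ((j : ℝ) - i) ^ 2) n
    simp only [nsmul_eq_mul] at this
    rw [this]
    calc ∑ p ∈ antidiagonal n, (n.choose p.1 : ℝ) *
          ((((p.2 + 1 : ℕ) : ℝ) - p.1) ^ 2 + ((p.2 : ℝ) - (p.1 + 1 : ℕ)) ^ 2)
        = ∑ p ∈ antidiagonal n,
            (2 * (n.choose p.1 * ((p.2 : ℝ) - p.1) ^ 2) + 2 * n.choose p.1) := by
          refine sum_congr rfl fun p _ => ?_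
          push_cast; ring
      _ = _ := by
          rw [sum_add_distrib, ← mul_sum, ← mul_sum, ih, sum_antidiagonal_choose]
          push_cast; ring

theorem Finset.Nat.sum_antidiagonal_choose_mul_abs_sub_le (n : ℕ) :
    ∑ p ∈ antidiagonal n, n.choose p.1 * |(p.2 : ℝ) - p.1| ≤ 2 ^ n * Real.sqrt n := by
  have hCS : (∑ p ∈ antidiagonal n, n.choose p.1 * |(p.2 : ℝ) - p.1|) ^ 2 ≤
      (∑ p ∈ antidiagonal n, (n.choose p.1 : ℝ)) *
        ∑ p ∈ antidiagonal n, n.choose p.1 * ((p.2 : ℝ) - p.1) ^ 2 :=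
    sum_sq_le_sum_mul_sum_of_sq_le_mul _ (fun _ _ => by positivity) (fun _ _ => by positivity)
      fun p _ => le_of_eq (by rw [mul_pow, sq_abs]; ring)
  rw [sum_antidiagonal_choose, sum_antidiagonal_choose_mul_sub_sq] at hCS
  refine (pow_le_pow_iff_left₀ (by positivity) (by positivity) two_ne_zero).1 (hCS.trans_eq ?_)
  rw [mul_pow, Real.sq_sqrt n.cast_nonneg]
  ring

theorem one_add_pow_eq_sum_antidiagonal {A : Type*} [Ring A] (T : A) (n : ℕ) :
    (1 + T) ^ n = ∑ p ∈ antidiagonal n, n.choose p.1 • T ^ p.1 := by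
  simp [add_comm (1 : A), (Commute.one_right T).add_pow']

theorem natCast_smul_one_sub_mul_one_add_pow {A : Type*} [Ring A] [Algebra ℝ A] (T : A) (n : ℕ) :
    ((n + 1 : ℕ) : ℝ) • ((1 - T) * (1 + T) ^ n) =
      ∑ p ∈ antidiagonal (n + 1), (n + 1).choose p.1 • (((p.2 : ℝ) - p.1) • T ^ p.1) := by
  induction n with
  | zero => simp [Finset.Nat.antidiagonal_succ, sub_eq_add_neg]
  | succ n ih =>
    have pascal : ∀ i j : ℕ,
        (((j + 1 : ℕ) : ℝ) - i) • T ^ i + ((j : ℝ) - (i + 1 : ℕ)) • T ^ (i + 1) =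
          (1 + T) * (((j : ℝ) - i) • T ^ i) + (1 - T) * T ^ i := by
      intro i j
      simp only [pow_succ', add_mul, sub_mul, one_mul, mul_smul_comm]
      push_cast
      module
    rw [Finset.Nat.sum_antidiagonal_choose_succ_nsmul_symm (fun i j => ((j : ℝ) - i) • T ^ i)]
    simp only [pascal, smul_add, sum_add_distrib, ← mul_smul_comm, ← mul_sum, ← ih,
      ← one_add_pow_eq_sum_antidiagonal]
    have hc : Commute (1 + T) (1 - T) :=
      (Commute.one_right _).sub_right ((Commute.one_left T).add_left (Commute.refl T))
    rw [mul_smul_comm, ← mul_assoc, hc.eq, mul_assoc, mul_smul_comm, ← pow_succ', mul_smul_comm]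
    push_cast
    module

theorem sqrt_mul_norm_one_sub_mul_one_add_pow_le {A : Type*} [NormedRing A] [NormedAlgebra ℝ A]
    {T : A} {C : ℝ} (hT : ∀ j, ‖T ^ j‖ ≤ C) (k : ℕ) :
    Real.sqrt (k + 1) * ‖(1 - T) * (1 + T) ^ k‖ ≤ 2 ^ (k + 1) * C := by
  have hC : 0 ≤ C := (norm_nonneg _).trans (hT 0)
  have hsqrt : 0 < Real.sqrt (k + 1) := Real.sqrt_pos.2 (by positivity)
  have key : (k + 1 : ℝ) * ‖(1 - T) * (1 + T) ^ k‖ ≤ 2 ^ (k + 1) * Real.sqrt (k + 1) * C :=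
    calc (k + 1 : ℝ) * ‖(1 - T) * (1 + T) ^ k‖
        = ‖((k + 1 : ℕ) : ℝ) • ((1 - T) * (1 + T) ^ k)‖ := by
          rw [norm_smul, Real.norm_natCast, Nat.cast_succ]
      _ ≤ ∑ p ∈ antidiagonal (k + 1), (k + 1).choose p.1 * |(p.2 : ℝ) - p.1| * C := by
          rw [natCast_smul_one_sub_mul_one_add_pow]
          refine norm_sum_le_of_le _ fun p _ => norm_nsmul_le.trans ?_
          rw [norm_smul, Real.norm_eq_abs, mul_assoc]
          gcongr
          exact hT _
      _ ≤ 2 ^ (k + 1) * Real.sqrt (k + 1) * C := by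
          rw [← sum_mul]
          gcongr
          exact_mod_cast Finset.Nat.sum_antidiagonal_choose_mul_abs_sub_le (k + 1)
  refine le_of_mul_le_mul_left ?_ hsqrt
  calc Real.sqrt (k + 1) * (Real.sqrt (k + 1) * ‖(1 - T) * (1 + T) ^ k‖)
      = (k + 1 : ℝ) * ‖(1 - T) * (1 + T) ^ k‖ := by
        rw [← mul_assoc, Real.mul_self_sqrt (by positivity)]
    _ ≤ Real.sqrt (k + 1) * (2 ^ (k + 1) * C) := by linarith

theorem inverse_one_sub_pow_eq_smul_one_add_pow_mul {A : Type*} [Ring A] [Algebra ℝ A] {B : A}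
    (hU : IsUnit (1 - B)) (hV : IsUnit (1 - (2⁻¹ : ℝ) • B)) (k : ℕ) :
    Ring.inverse (1 - B) ^ k = (2⁻¹ : ℝ) ^ k •
      ((1 + Ring.inverse (1 - B)) ^ k * Ring.inverse (1 - (2⁻¹ : ℝ) • B) ^ k) := by
  set T := Ring.inverse (1 - B)
  set S := Ring.inverse (1 - (2⁻¹ : ℝ) • B)
  have hTS : (1 + T) * S = (2 : ℝ) • T :=
    calc (1 + T) * S = T * ((1 - B) + 1) * S := by
          rw [mul_add, Ring.inverse_mul_cancel _ hU, mul_one, add_comm]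
      _ = (2 : ℝ) • (T * ((1 - (2⁻¹ : ℝ) • B) * S)) := by
          rw [← mul_assoc, ← smul_mul_assoc, ← mul_smul_comm]
          congr 2
          module
      _ = (2 : ℝ) • T := by rw [Ring.mul_inverse_cancel _ hV, mul_one]
  have hUV : Commute (1 - B) (1 - (2⁻¹ : ℝ) • B) :=
    (Commute.one_right _).sub_right (((Commute.one_left B).sub_left (Commute.refl B)).smul_right _)
  have hcomm : Commute (1 + T) S := (Commute.one_left S).add_left hUV.ringInverse_ringInverse
  rw [← hcomm.mul_pow, hTS, smul_pow, smul_smul, ← mul_pow, inv_mul_cancel₀ two_ne_zero, one_pow,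
    one_smul]

noncomputable def gammaDensity (n : ℕ) (t : ℝ) : ℝ := t ^ n * Real.exp (-t) / n !

theorem gammaDensity_nonneg (n : ℕ) {t : ℝ} (ht : 0 ≤ t) : 0 ≤ gammaDensity n t := by
  unfold gammaDensity; positivity

theorem integrableOn_gammaDensity (n : ℕ) : IntegrableOn (gammaDensity n) (Ioi 0) := by
  refine IntegrableOn.congr_fun
    ((Real.GammaIntegral_convergent (s := n + 1) (by positivity)).div_const (n ! : ℝ))
    (fun t _ => ?_) measurableSet_Ioi
  simp [gammaDensity, mul_comm]

theorem integral_gammaDensity (n : ℕ) : ∫ t in Ioi 0, gammaDensity n t = 1 := by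
  have hΓ := Real.Gamma_eq_integral (s := n + 1) (by positivity)
  rw [Real.Gamma_nat_eq_factorial] at hΓ
  simp only [gammaDensity, integral_div, add_sub_cancel_right, Real.rpow_natCast, mul_comm] at hΓ ⊢
  rw [← hΓ, div_self (by positivity)]

theorem tendsto_gammaDensity_atTop (n : ℕ) : Tendsto (gammaDensity n) atTop (𝓝 0) := by
  unfold gammaDensity
  simpa using (Real.tendsto_pow_mul_exp_neg_atTop_nhds_zero n).div_const (n ! : ℝ)

theorem hasDerivAt_gammaDensity_zero (t : ℝ) :
    HasDerivAt (gammaDensity 0) (-gammaDensity 0 t) t := by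
  have h : gammaDensity 0 = fun t => Real.exp (-t) := by ext; simp [gammaDensity]
  simpa [h] using (hasDerivAt_neg t).exp

theorem hasDerivAt_gammaDensity_succ (n : ℕ) (t : ℝ) :
    HasDerivAt (gammaDensity (n + 1)) (gammaDensity n t - gammaDensity (n + 1) t) t := by
  have hexp : HasDerivAt (fun t => Real.exp (-t)) (-Real.exp (-t)) t := by
    simpa using (hasDerivAt_neg t).exp
  refine (((hasDerivAt_pow (n + 1) t).mul hexp).div_const ((n + 1)! : ℝ)).congr_deriv ?_
  simp only [gammaDensity, Nat.factorial_succ, add_tsub_cancel_right]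
  push_cast
  field_simp
  ring

section SemigroupResolvent

variable {𝔸 : Type*} [NormedRing 𝔸] [NormedAlgebra ℝ 𝔸] {B : 𝔸} {C : ℝ}

variable (B) in
noncomputable def gammaAverageExp (n : ℕ) : 𝔸 := ∫ t in Ioi 0, gammaDensity n t • exp (t • B)

theorem norm_gammaAverageExp_le (hC : ∀ t : ℝ, 0 ≤ t → ‖exp (t • B)‖ ≤ C) (n : ℕ) :
    ‖gammaAverageExp B n‖ ≤ C := by
  have hbound : ∀ᵐ t ∂(volume.restrict (Ioi (0 : ℝ))),
      ‖gammaDensity n t • exp (t • B)‖ ≤ gammaDensity n t * C := by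
    refine (ae_restrict_iff' measurableSet_Ioi).2 (Eventually.of_forall fun t ht => ?_)
    rw [norm_smul, Real.norm_of_nonneg (gammaDensity_nonneg n (le_of_lt ht))]
    exact mul_le_mul_of_nonneg_left (hC t (le_of_lt ht)) (gammaDensity_nonneg n (le_of_lt ht))
  calc ‖gammaAverageExp B n‖ ≤ ∫ t in Ioi 0, gammaDensity n t * C :=
        norm_integral_le_of_norm_le ((integrableOn_gammaDensity n).mul_const C) hbound
    _ = C := by rw [integral_mul_const, integral_gammaDensity, one_mul]

variable [CompleteSpace 𝔸]

theorem continuous_exp_smul (B : 𝔸) : Continuous fun t : ℝ => exp (t • B) :=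
  continuous_iff_continuousAt.2 fun t => (hasDerivAt_exp_smul_const B t).continuousAt

theorem integrableOn_smul_exp_smul (hC : ∀ t : ℝ, 0 ≤ t → ‖exp (t • B)‖ ≤ C) {g : ℝ → ℝ}
    (hg : IntegrableOn g (Ioi 0)) : IntegrableOn (fun t => g t • exp (t • B)) (Ioi 0) :=
  hg.smul_bdd C (continuous_exp_smul B).aestronglyMeasurable <|
    (ae_restrict_iff' measurableSet_Ioi).2 <| Eventually.of_forall fun t ht => hC t (le_of_lt ht)

/-- `L` will be left or right multiplication by `B`: using both makes the Laplace integral a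
two-sided inverse of `1 - B`. -/
theorem apply_integral_add_integral_deriv_smul_exp_smul (hC : ∀ t : ℝ, 0 ≤ t → ‖exp (t • B)‖ ≤ C)
    (L : 𝔸 →L[ℝ] 𝔸) (hL : ∀ t : ℝ, HasDerivAt (fun s : ℝ => exp (s • B)) (L (exp (t • B))) t)
    {g g' : ℝ → ℝ} (hg : ∀ t, HasDerivAt g (g' t) t) (hgi : IntegrableOn g (Ioi 0))
    (hg'i : IntegrableOn g' (Ioi 0)) (hg_top : Tendsto g atTop (𝓝 0)) :
    L (∫ t in Ioi 0, g t • exp (t • B)) + ∫ t in Ioi 0, g' t • exp (t • B) = -(g 0 • 1) := by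
  have hint := integrableOn_smul_exp_smul hC hgi
  have hLint : IntegrableOn (fun t => g t • L (exp (t • B))) (Ioi 0) := by
    have := L.integrable_comp hint
    simp only [map_smul] at this
    exact this
  have hdecay : Tendsto (fun t => g t • exp (t • B)) atTop (𝓝 0) := by
    refine squeeze_zero_norm' ?_ (by simpa using hg_top.norm.mul_const C)
    filter_upwards [eventually_ge_atTop 0] with t ht
    rw [norm_smul]
    exact mul_le_mul_of_nonneg_left (hC t ht) (norm_nonneg _)
  have hFTC := integral_Ioi_of_hasDerivAt_of_tendsto' (f := fun t => g t • exp (t • B))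
    (fun t _ => (hg t).smul (hL t)) (hLint.add (integrableOn_smul_exp_smul hC hg'i)) hdecay
  have hcomm : ∫ t in Ioi 0, g t • L (exp (t • B)) = L (∫ t in Ioi 0, g t • exp (t • B)) := by
    rw [← L.integral_comp_comm hint]
    simp only [map_smul]
  rw [integral_add hLint (integrableOn_smul_exp_smul hC hg'i), hcomm] at hFTC
  simpa only [zero_smul, exp_zero, zero_sub] using hFTC

theorem gammaAverageExp_zero_sub_apply (hC : ∀ t : ℝ, 0 ≤ t → ‖exp (t • B)‖ ≤ C)
    (L : 𝔸 →L[ℝ] 𝔸) (hL : ∀ t : ℝ, HasDerivAt (fun s : ℝ => exp (s • B)) (L (exp (t • B))) t) :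
    gammaAverageExp B 0 - L (gammaAverageExp B 0) = 1 := by
  have h := apply_integral_add_integral_deriv_smul_exp_smul hC L hL hasDerivAt_gammaDensity_zero
    (integrableOn_gammaDensity 0) (integrableOn_gammaDensity 0).neg (tendsto_gammaDensity_atTop 0)
  have h0 : gammaDensity 0 0 = 1 := by simp [gammaDensity]
  simp only [neg_smul, integral_neg, h0, one_smul] at h
  calc gammaAverageExp B 0 - L (gammaAverageExp B 0)
      = -(L (gammaAverageExp B 0) + -gammaAverageExp B 0) := by abel
    _ = 1 := by rw [gammaAverageExp, h, neg_neg]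

theorem gammaAverageExp_succ_sub_apply (hC : ∀ t : ℝ, 0 ≤ t → ‖exp (t • B)‖ ≤ C)
    (L : 𝔸 →L[ℝ] 𝔸) (hL : ∀ t : ℝ, HasDerivAt (fun s : ℝ => exp (s • B)) (L (exp (t • B))) t)
    (n : ℕ) :
    gammaAverageExp B (n + 1) - L (gammaAverageExp B (n + 1)) = gammaAverageExp B n := by
  have h := apply_integral_add_integral_deriv_smul_exp_smul hC L hL
    (hasDerivAt_gammaDensity_succ n) (integrableOn_gammaDensity (n + 1))
    ((integrableOn_gammaDensity n).sub (integrableOn_gammaDensity (n + 1)))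
    (tendsto_gammaDensity_atTop (n + 1))
  simp only [sub_smul] at h
  rw [integral_sub (integrableOn_smul_exp_smul hC (integrableOn_gammaDensity n))
    (integrableOn_smul_exp_smul hC (integrableOn_gammaDensity (n + 1)))] at h
  have h0 : gammaDensity (n + 1) 0 = 0 := by simp [gammaDensity]
  simp only [h0, zero_smul, neg_zero] at h
  calc gammaAverageExp B (n + 1) - L (gammaAverageExp B (n + 1))
      = gammaAverageExp B n - (L (gammaAverageExp B (n + 1)) +
          (gammaAverageExp B n - gammaAverageExp B (n + 1))) := by abel
    _ = gammaAverageExp B n := by unfold gammaAverageExp; rw [h, sub_zero]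

theorem gammaAverageExp_zero_mul_one_sub (hC : ∀ t : ℝ, 0 ≤ t → ‖exp (t • B)‖ ≤ C) :
    gammaAverageExp B 0 * (1 - B) = 1 := by
  simpa [mul_sub] using gammaAverageExp_zero_sub_apply hC ((ContinuousLinearMap.mul ℝ 𝔸).flip B)
    (hasDerivAt_exp_smul_const B)

theorem one_sub_mul_gammaAverageExp_zero (hC : ∀ t : ℝ, 0 ≤ t → ‖exp (t • B)‖ ≤ C) :
    (1 - B) * gammaAverageExp B 0 = 1 := by
  simpa [sub_mul] using gammaAverageExp_zero_sub_apply hC (ContinuousLinearMap.mul ℝ 𝔸 B)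
    (hasDerivAt_exp_smul_const' B)

theorem gammaAverageExp_succ_mul_one_sub (hC : ∀ t : ℝ, 0 ≤ t → ‖exp (t • B)‖ ≤ C) (n : ℕ) :
    gammaAverageExp B (n + 1) * (1 - B) = gammaAverageExp B n := by
  simpa [mul_sub] using gammaAverageExp_succ_sub_apply hC ((ContinuousLinearMap.mul ℝ 𝔸).flip B)
    (hasDerivAt_exp_smul_const B) n

theorem isUnit_one_sub_of_norm_exp_smul_le (hC : ∀ t : ℝ, 0 ≤ t → ‖exp (t • B)‖ ≤ C) :
    IsUnit (1 - B) :=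
  ⟨⟨1 - B, gammaAverageExp B 0, one_sub_mul_gammaAverageExp_zero hC,
    gammaAverageExp_zero_mul_one_sub hC⟩, rfl⟩

theorem inverse_one_sub_pow_succ_eq_gammaAverageExp (hC : ∀ t : ℝ, 0 ≤ t → ‖exp (t • B)‖ ≤ C)
    (n : ℕ) : Ring.inverse (1 - B) ^ (n + 1) = gammaAverageExp B n := by
  have hU := isUnit_one_sub_of_norm_exp_smul_le hC
  induction n with
  | zero =>
    rw [zero_add, pow_one, ← Ring.mul_inverse_cancel_right _ (gammaAverageExp B 0) hU,
      gammaAverageExp_zero_mul_one_sub hC, one_mul]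
  | succ n ih =>
    rw [pow_succ, ih, ← gammaAverageExp_succ_mul_one_sub hC, Ring.mul_inverse_cancel_right _ _ hU]

theorem norm_inverse_one_sub_pow_le (hC : ∀ t : ℝ, 0 ≤ t → ‖exp (t • B)‖ ≤ C) (k : ℕ) :
    ‖Ring.inverse (1 - B) ^ k‖ ≤ C := by
  cases k with
  | zero => simpa using hC 0 le_rfl
  | succ n =>
    rw [inverse_one_sub_pow_succ_eq_gammaAverageExp hC]
    exact norm_gammaAverageExp_le hC n

theorem sqrt_mul_norm_one_sub_inverse_mul_pow_le (hC : ∀ t : ℝ, 0 ≤ t → ‖exp (t • B)‖ ≤ C)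
    (k : ℕ) :
    Real.sqrt (k + 1) * ‖(1 - Ring.inverse (1 - B)) * Ring.inverse (1 - B) ^ k‖ ≤ 2 * C * C := by
  have hC₂ : ∀ t : ℝ, 0 ≤ t → ‖exp (t • (2⁻¹ : ℝ) • B)‖ ≤ C := fun t ht => by
    rw [smul_smul]
    exact hC _ (by positivity)
  have hT := norm_inverse_one_sub_pow_le hC
  have hS := norm_inverse_one_sub_pow_le hC₂
  have hC₀ : 0 ≤ C := (norm_nonneg _).trans (hT 0)
  set T := Ring.inverse (1 - B)
  set S := Ring.inverse (1 - (2⁻¹ : ℝ) • B)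
  have hsplit : (1 - T) * T ^ k = (2⁻¹ : ℝ) ^ k • ((1 - T) * (1 + T) ^ k * S ^ k) := by
    rw [inverse_one_sub_pow_eq_smul_one_add_pow_mul (isUnit_one_sub_of_norm_exp_smul_le hC)
      (isUnit_one_sub_of_norm_exp_smul_le hC₂), mul_smul_comm, mul_assoc]
  calc Real.sqrt (k + 1) * ‖(1 - T) * T ^ k‖
      = (2⁻¹ : ℝ) ^ k * (Real.sqrt (k + 1) * ‖(1 - T) * (1 + T) ^ k * S ^ k‖) := by
        rw [hsplit, norm_smul, norm_pow, Real.norm_of_nonneg (by norm_num)]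
        ring
    _ ≤ (2⁻¹ : ℝ) ^ k * ((Real.sqrt (k + 1) * ‖(1 - T) * (1 + T) ^ k‖) * ‖S ^ k‖) := by
        rw [mul_assoc (Real.sqrt _)]
        gcongr
        exact norm_mul_le _ _
    _ ≤ (2⁻¹ : ℝ) ^ k * ((2 ^ (k + 1) * C) * C) := by
        gcongr (2⁻¹ : ℝ) ^ k * (?_ * ?_)
        · exact sqrt_mul_norm_one_sub_mul_one_add_pow_le hT k
        · exact hS k
    _ = 2 * C * C := by
        rw [pow_succ, inv_pow]
        field_simp

end SemigroupResolvent

theorem weaker_tauberian_on_semigroup_set_general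
    {X : Type*} [NormedAddCommGroup X] [NormedSpace ℂ X] [CompleteSpace X]
    (Q : X →L[ℂ] X) (z : ℂ)
    (hz : ∃ C : ℝ, ∀ t : ℝ, 0 ≤ t →
        ‖NormedSpace.exp (((t : ℂ) * z) • Q)‖ ≤ C) :
    ∃ C : ℝ, ∀ k : ℕ,
      Real.sqrt (k + 1) *
        ‖(1 - Ring.inverse (1 - z • Q)) * (Ring.inverse (1 - z • Q)) ^ k‖ ≤ C := by
  obtain ⟨C, hC⟩ := hz
  refine ⟨2 * C * C, sqrt_mul_norm_one_sub_inverse_mul_pow_le (𝔸 := X →L[ℂ] X) fun t ht => ?_⟩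
  rw [← Complex.coe_smul, smul_smul]
  exact hC t ht

theorem weaker_tauberian_on_semigroup_set
    {X : Type*} [NormedAddCommGroup X] [NormedSpace ℂ X] [CompleteSpace X]
    (Q : X →L[ℂ] X) (hQ : spectrum ℂ Q = {0}) (z : ℂ)
    (hz : ∃ C : ℝ, ∀ t : ℝ, 0 ≤ t →
        ‖NormedSpace.exp (((t : ℂ) * z) • Q)‖ ≤ C) :
    ∃ C : ℝ, ∀ k : ℕ,
      Real.sqrt (k + 1) *
        ‖(1 - Ring.inverse (1 - z • Q)) * (Ring.inverse (1 - z • Q)) ^ k‖ ≤ C :=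
  weaker_tauberian_on_semigroup_set_general Q z hz
end
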